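/- arXiv:1904.00934 — 4 statements merged into one kernel-verified Lean document; each statement's English description precedes it below -/
import Mathlib

section
/- Fix k ≥ 1. For every (finite) CQ q there exists a CQ in GHW(k)^∞ that is a GHW(k)^∞-overapproximation of q. -/
/-!
Common formalization of relational databases, conjunctive queries (CQs),
generalized hypertreewidth, existential cover (pebble) games, and
approximations of CQs, following Barceló, Romero, Zeume,
"A More General Theory of Static Approximations for Conjunctive Queries".
-/

/-- A relational schema: a finite set of relation symbols, each with an arity. -/
structure Schema where
  Rel : Type
  rel_finite : Finite Rel
  arity : Rel → ℕ

/-- A fact (atom) over schema `σ`, with arguments (constants/variables) from `α`. -/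
structure Atom (σ : Schema) (α : Type) where
  rel : σ.Rel
  args : Fin (σ.arity rel) → α

/-- A database instance over `σ` with elements from `α`: a set of facts.
    (Finiteness or countability is imposed separately where needed.) -/
abbrev DB (σ : Schema) (α : Type) := Set (Atom σ α)

/-- Applying a map on elements to a fact. -/
def Atom.map {σ : Schema} {α β : Type} (h : α → β) (f : Atom σ α) : Atom σ β :=
  ⟨f.rel, fun i => h (f.args i)⟩

/-- `h` is a homomorphism from `D` to `D'`. -/
def IsHom {σ : Schema} {α β : Type} (h : α → β) (D : DB σ α) (D' : DB σ β) : Prop :=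
  ∀ f ∈ D, f.map h ∈ D'

/-- `(D, a) → (D', b)`: there is a homomorphism from `D` to `D'` mapping `a` to `b`. -/
def HomTup {σ : Schema} {α β : Type} {n : ℕ} (D : DB σ α) (a : Fin n → α)
    (D' : DB σ β) (b : Fin n → β) : Prop :=
  ∃ h : α → β, IsHom h D D' ∧ ∀ i, h (a i) = b i

/-- The active domain of a database: the elements appearing in its facts. -/
def adom {σ : Schema} {α : Type} (D : DB σ α) : Set α :=
  ⋃ f ∈ D, Set.range f.args

/-- A tree decomposition of a set of atoms `A` with respect to the set `E` of
    existentially quantified variables: a (possibly infinite) tree `T` together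
    with bags `bag t ⊆ E` such that the existential variables of every atom are
    contained in some bag, and for every existential variable the set of nodes
    whose bag contains it induces a connected subtree. -/
structure TreeDecomp {σ : Schema} {V : Type} (A : DB σ V) (E : Set V) where
  node : Type
  T : SimpleGraph node
  isTree : T.IsTree
  bag : node → Set V
  bag_sub : ∀ t, bag t ⊆ E
  covers : ∀ f ∈ A, ∃ t, Set.range f.args ∩ E ⊆ bag t
  conn : ∀ y ∈ E, (SimpleGraph.induce {t | y ∈ bag t} T).Connected

/-- The decomposition has width at most `k`: every bag is covered by at most
    `k` atoms of `A`. -/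
def TreeDecomp.widthLE {σ : Schema} {V : Type} {A : DB σ V} {E : Set V}
    (td : TreeDecomp A E) (k : ℕ) : Prop :=
  ∀ t, ∃ S : Finset (Atom σ V), ↑S ⊆ A ∧ S.card ≤ k ∧
    td.bag t ⊆ ⋃ f ∈ (S : Set (Atom σ V)), Set.range f.args

/-- The atoms `A` (with existential variables `E`) have generalized
    hypertreewidth at most `k`. -/
def ghwAuxLE {σ : Schema} {V : Type} (A : DB σ V) (E : Set V) (k : ℕ) : Prop :=
  ∃ td : TreeDecomp A E, td.widthLE k

/-- A conjunctive query over `σ` with `n` free variables: a finite set of atoms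
    over a type of variables, together with the tuple of free variables.
    Its canonical database is `atoms`. -/
structure CQ (σ : Schema) (n : ℕ) where
  Var : Type
  atoms : DB σ Var
  free : Fin n → Var
  finAtoms : atoms.Finite

namespace CQ

variable {σ : Schema} {n : ℕ}

/-- The existentially quantified variables of a CQ: variables occurring in its
    atoms that are not free. -/
def existVars (q : CQ σ n) : Set q.Var := adom q.atoms \ Set.range q.free

/-- `q` has generalized hypertreewidth at most `k`, i.e. `q ∈ GHW(k)`. -/
def ghwLE (q : CQ σ n) (k : ℕ) : Prop := ghwAuxLE q.atoms q.existVars k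

/-- The result of evaluating `q` over a database `D` (with constants from `ℕ`):
    all tuples of elements of `D` to which the canonical database of `q` maps
    homomorphically (sending the free variables to the tuple). -/
def eval (q : CQ σ n) (D : DB σ ℕ) : Set (Fin n → ℕ) :=
  {a | (∀ i, a i ∈ adom D) ∧ HomTup q.atoms q.free D a}

/-- Containment of CQs: `q ⊆ q'`, i.e. `q(D) ⊆ q'(D)` for every (finite) database. -/
def le (q q' : CQ σ n) : Prop :=
  ∀ D : DB σ ℕ, D.Finite → q.eval D ⊆ q'.eval D

/-- Equivalence of CQs: mutual containment. -/
def equiv (q q' : CQ σ n) : Prop := q.le q' ∧ q'.le q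

end CQ

/-- `q'` is a `GHW(k)`-overapproximation of `q`: `q' ∈ GHW(k)`, `q ⊆ q'`, and
    there is no `q'' ∈ GHW(k)` with `q ⊆ q'' ⊆ q'` and `q'' ≢ q'`. -/
def IsOverapprox {σ : Schema} {n : ℕ} (k : ℕ) (q q' : CQ σ n) : Prop :=
  q'.ghwLE k ∧ q.le q' ∧
    ¬ ∃ q'' : CQ σ n, q''.ghwLE k ∧ q.le q'' ∧ q''.le q' ∧ ¬ q''.equiv q'

/-- `q'` is a `GHW(k)`-underapproximation of `q`: `q' ∈ GHW(k)`, `q' ⊆ q`, and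
    there is no `q'' ∈ GHW(k)` with `q' ⊆ q'' ⊆ q` and `q'' ≢ q'`. -/
def IsUnderapprox {σ : Schema} {n : ℕ} (k : ℕ) (q q' : CQ σ n) : Prop :=
  q'.ghwLE k ∧ q'.le q ∧
    ¬ ∃ q'' : CQ σ n, q''.ghwLE k ∧ q'.le q'' ∧ q''.le q ∧ ¬ q''.equiv q'

/-- `q' ⊑_q q''`: the symmetric difference of `q''` and `q` is contained in the
    symmetric difference of `q'` and `q`, over every (finite) database. -/
def deltaLE {σ : Schema} {n : ℕ} (q q' q'' : CQ σ n) : Prop :=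
  ∀ D : DB σ ℕ, D.Finite →
    symmDiff (q.eval D) (q''.eval D) ⊆ symmDiff (q.eval D) (q'.eval D)

/-- `q'` is a `GHW(k)`-Δ-approximation of `q`: `q' ∈ GHW(k)` and `q'` is maximal
    with respect to the partial order `⊑_q` on `GHW(k)`. -/
def IsDeltaApprox {σ : Schema} {n : ℕ} (k : ℕ) (q q' : CQ σ n) : Prop :=
  q'.ghwLE k ∧
    ¬ ∃ q'' : CQ σ n, q''.ghwLE k ∧ deltaLE q q' q'' ∧ ¬ deltaLE q q'' q'

/-- `U` is covered by at most `k` atoms of `D`. -/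
def kCovered {σ : Schema} {α : Type} (k : ℕ) (D : DB σ α) (U : Set α) : Prop :=
  ∃ S : Finset (Atom σ α), ↑S ⊆ D ∧ S.card ≤ k ∧
    U ⊆ ⋃ f ∈ (S : Set (Atom σ α)), Set.range f.args

/-- `U` is a `k`-union of `D`: the union of the element sets of at most `k`
    atoms of `D`. -/
def kUnion {σ : Schema} {α : Type} (k : ℕ) (D : DB σ α) (U : Set α) : Prop :=
  ∃ S : Finset (Atom σ α), ↑S ⊆ D ∧ S.card ≤ k ∧
    U = ⋃ f ∈ (S : Set (Atom σ α)), Set.range f.args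

/-- The map `h` on the pebbled set `U`, extended by `a ↦ b` on the distinguished
    tuples, is a partial homomorphism from `D` to `D'`: `h` sends `a` to `b` and
    every fact of `D` whose elements lie in `U ∪ range a` to a fact of `D'`. -/
def PartialOk {σ : Schema} {α β : Type} {n : ℕ} (D : DB σ α) (D' : DB σ β)
    (a : Fin n → α) (b : Fin n → β) (U : Set α) (h : α → β) : Prop :=
  (∀ i, h (a i) = b i) ∧
  ∀ f ∈ D, Set.range f.args ⊆ U ∪ Set.range a → f.map h ∈ D'

/-- `(D, a) →_k (D', b)`: Duplicator has a winning strategy in the existential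
    `k`-cover game on `(D, a)` and `(D', b)`, presented as a nonempty family of
    positions (pebbled set + partial homomorphism) that is closed under
    Spoiler placing a pebble (provided the pebbled elements stay covered by at
    most `k` atoms of `D`) and under removing pebbles. -/
def PebbleWin {σ : Schema} {α β : Type} {n : ℕ} (k : ℕ) (D : DB σ α) (a : Fin n → α)
    (D' : DB σ β) (b : Fin n → β) : Prop :=
  ∃ F : Set (Set α × (α → β)),
    (∃ h, (∅, h) ∈ F) ∧
    (∀ p ∈ F, kCovered k D p.1 ∧ PartialOk D D' a b p.1 p.2) ∧
    (∀ p ∈ F, ∀ c : α, kCovered k D (insert c p.1) →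
      ∃ p' ∈ F, p'.1 = insert c p.1 ∧ ∀ x ∈ p.1, p'.2 x = p.2 x) ∧
    (∀ p ∈ F, ∀ U, U ⊆ p.1 → ∃ p' ∈ F, p'.1 = U ∧ ∀ x ∈ U, p'.2 x = p.2 x)

/-- Duplicator can survive `c` more rounds of the compact existential `k`-cover
    game from the position with pebbled set `U` and partial map `h`: whatever
    `k`-union `U'` Spoiler plays next, Duplicator has a consistent partial
    homomorphism on `U'` from which she can survive `c - 1` more rounds. -/
def WinRounds {σ : Schema} {α β : Type} {n : ℕ} (k : ℕ) (D : DB σ α) (a : Fin n → α)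
    (D' : DB σ β) (b : Fin n → β) : ℕ → Set α → (α → β) → Prop
  | 0, _, _ => True
  | c + 1, U, h => ∀ U', kUnion k D U' →
      ∃ h', (∀ x ∈ U ∩ U', h' x = h x) ∧ PartialOk D D' a b U' h' ∧
        WinRounds k D a D' b c U' h'

/-- `(D, a) →_k^c (D', b)`: Duplicator has a winning strategy in the first `c`
    rounds of the compact existential `k`-cover game on `(D, a)` and `(D', b)`. -/
def PebbleWinC {σ : Schema} {α β : Type} {n : ℕ} (k c : ℕ) (D : DB σ α) (a : Fin n → α)
    (D' : DB σ β) (b : Fin n → β) : Prop :=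
  ∃ h0, PartialOk D D' a b ∅ h0 ∧ WinRounds k D a D' b c ∅ h0

/-- The Gaifman graph of a set of atoms `A`: vertices are elements, with an edge
    between two distinct elements that occur together in some atom of `A`. -/
def gaifmanOf {σ : Schema} {V : Type} (A : DB σ V) : SimpleGraph V where
  Adj z z' := z ≠ z' ∧ ∃ f ∈ A, z ∈ Set.range f.args ∧ z' ∈ Set.range f.args
  symm := by
    constructor
    rintro z z' ⟨hne, f, hf, hz, hz'⟩
    exact ⟨hne.symm, f, hf, hz', hz⟩
  loopless := by
    constructor
    rintro z ⟨hne, -⟩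
    exact hne rfl

/-- A Boolean CQ is connected if its Gaifman graph (on the variables occurring
    in it) is connected. -/
def CQ.IsConnected {σ : Schema} (q : CQ σ 0) : Prop :=
  (SimpleGraph.induce (adom q.atoms) (gaifmanOf q.atoms)).Connected

/-- `q` is a core: no CQ with fewer atoms is (homomorphically) equivalent to it. -/
def IsCore {σ : Schema} {n : ℕ} (q : CQ σ n) : Prop :=
  ∀ q' : CQ σ n, HomTup q.atoms q.free q'.atoms q'.free →
    HomTup q'.atoms q'.free q.atoms q.free →
    q.atoms.ncard ≤ q'.atoms.ncard

/-- A possibly infinite CQ (a member of the class `GHW(k)^∞` once its width is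
    bounded): countably many atoms and finitely many free variables. -/
structure CQI (σ : Schema) (n : ℕ) where
  Var : Type
  atoms : DB σ Var
  free : Fin n → Var
  ctblAtoms : atoms.Countable

namespace CQI

variable {σ : Schema} {n : ℕ}

/-- The existentially quantified variables of a possibly infinite CQ. -/
def existVars (q : CQI σ n) : Set q.Var := adom q.atoms \ Set.range q.free

/-- `q` has generalized hypertreewidth at most `k`, i.e. `q ∈ GHW(k)^∞`. -/
def ghwLE (q : CQI σ n) (k : ℕ) : Prop := ghwAuxLE q.atoms q.existVars k

/-- Evaluation of a possibly infinite CQ over a database. -/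
def eval (q : CQI σ n) (D : DB σ ℕ) : Set (Fin n → ℕ) :=
  {a | (∀ i, a i ∈ adom D) ∧ HomTup q.atoms q.free D a}

/-- Containment (with respect to finite databases only). -/
def le (q q' : CQI σ n) : Prop :=
  ∀ D : DB σ ℕ, D.Finite → q.eval D ⊆ q'.eval D

end CQI

/-- Every finite CQ is in particular a possibly infinite CQ. -/
def CQ.toI {σ : Schema} {n : ℕ} (q : CQ σ n) : CQI σ n :=
  ⟨q.Var, q.atoms, q.free, q.finAtoms.countable⟩

/-! ### Auxiliary development -/

namespace Overapprox

open SimpleGraph Walk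

/-! #### Star-gluing of trees -/

section Glue

variable {I : Type} {N : I → Type} (T : ∀ i, SimpleGraph (N i)) (rt : ∀ i, N i)

/-- star-glue of a family of graphs at designated roots, with a fresh center. -/
def glue : SimpleGraph (Option (Σ i, N i)) where
  Adj x y :=
    match x, y with
    | none, none => False
    | none, some b => b.2 = rt b.1
    | some a, none => a.2 = rt a.1
    | some a, some b => ∃ (i : I) (s t : N i), a = ⟨i, s⟩ ∧ b = ⟨i, t⟩ ∧ (T i).Adj s t
  symm := by
    constructor
    rintro (_ | a) (_ | b) h
    · exact h
    · exact h
    · exact h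
    · obtain ⟨i, s, t, rfl, rfl, h⟩ := h
      exact ⟨i, t, s, rfl, rfl, h.symm⟩
  loopless := by
    constructor
    rintro (_ | a) h
    · exact h
    · obtain ⟨i, s, t, h1, h2, h⟩ := h
      rw [h1] at h2
      have h3 := eq_of_heq (Sigma.mk.inj_iff.1 h2).2
      exact (T i).loopless.irrefl _ (h3 ▸ h)

lemma glue_adj_some {a b : Σ i, N i} (h : (glue T rt).Adj (some a) (some b)) :
    ∃ (i : I) (s t : N i), a = ⟨i, s⟩ ∧ b = ⟨i, t⟩ ∧ (T i).Adj s t := h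

lemma glue_adj_of {i : I} {s t : N i} (h : (T i).Adj s t) :
    (glue T rt).Adj (some ⟨i, s⟩) (some ⟨i, t⟩) := ⟨i, s, t, rfl, rfl, h⟩

/-- the branch inclusion as a graph hom -/
def branchHom (i : I) : (T i) →g (glue T rt) where
  toFun t := some ⟨i, t⟩
  map_rel' h := glue_adj_of T rt h

lemma glue_connected (h : ∀ i, (T i).Connected) : (glue T rt).Connected := by
  have hreach : ∀ x : Option (Σ i, N i), (glue T rt).Reachable x none := by
    rintro (_ | ⟨i, t⟩)
    · exact SimpleGraph.Reachable.refl _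
    · have h1 : (glue T rt).Reachable (some ⟨i, t⟩) (some ⟨i, rt i⟩) :=
        SimpleGraph.Reachable.map (branchHom T rt i) ((h i).preconnected t (rt i))
      exact h1.trans (SimpleGraph.Adj.reachable
        (by exact rfl : (glue T rt).Adj (some ⟨i, rt i⟩) none))
  haveI : Nonempty (Option (Σ i, N i)) := ⟨none⟩
  exact ⟨fun x y => (hreach x).trans (hreach y).symm⟩

/-- a walk avoiding the center stays in one branch, and reflects into it -/
lemma glue_reflect : ∀ {x y : Option (Σ i, N i)} (w : (glue T rt).Walk x y) {i : I} {s : N i},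
    x = some ⟨i, s⟩ → none ∉ w.support →
    ∃ (t : N i) (w' : (T i).Walk s t), y = some ⟨i, t⟩ ∧
      w.support = w'.support.map (fun u => some ⟨i, u⟩) ∧
      w.edges = w'.edges.map (Sym2.map (fun u => some ⟨i, u⟩)) := by
  intro x y w
  induction w with
  | nil =>
    rintro i s rfl hn
    exact ⟨s, SimpleGraph.Walk.nil, rfl, by simp, by simp⟩
  | @cons u v yy h rest ih =>
    rintro i s rfl hn
    have hnr : none ∉ rest.support := fun hc => hn (by
      rw [SimpleGraph.Walk.support_cons]; exact List.mem_cons_of_mem _ hc)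
    have hv : v ≠ none := fun hv => hnr (hv ▸ rest.start_mem_support)
    obtain ⟨b, rfl⟩ := Option.ne_none_iff_exists'.1 hv
    obtain ⟨i', s', t', h1, h2, hadj⟩ := glue_adj_some T rt h
    obtain ⟨hi, hh⟩ := Sigma.mk.inj_iff.1 h1
    subst hi
    have hs : s = s' := eq_of_heq hh
    subst hs
    subst h2
    obtain ⟨t, w', rfl, hsup, hedg⟩ := ih rfl hnr
    refine ⟨t, SimpleGraph.Walk.cons hadj w', rfl, ?_, ?_⟩
    · simp [SimpleGraph.Walk.support_cons, hsup]
    · simp [SimpleGraph.Walk.edges_cons, hedg]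

lemma glue_sameBranch {x y : Option (Σ i, N i)} (w : (glue T rt).Walk x y) {i : I} {s : N i}
    {j : I} {t : N j} (hx : x = some ⟨i, s⟩) (hy : y = some ⟨j, t⟩)
    (hn : none ∉ w.support) : i = j := by
  obtain ⟨t', w', hy', _, _⟩ := glue_reflect T rt w hx hn
  rw [hy] at hy'
  exact (Sigma.mk.inj_iff.1 (Option.some_injective _ hy')).1.symm

lemma glue_no_center_cycle (hT : ∀ i, (T i).IsAcyclic)
    (c : (glue T rt).Walk none none) (hc : c.IsCycle) : False := by
  cases c with
  | nil => exact hc.ne_nil rfl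
  | @cons _ z₁ _ h₁ rest =>
    rcases z₁ with _ | ⟨i, r⟩
    · exact h₁
    · have hr : r = rt i := h₁
      subst hr
      have hrest_nodup : rest.support.Nodup := hc.support_nodup
      have hrest_nnil : ¬ rest.Nil := SimpleGraph.Walk.not_nil_of_ne (by simp)
      obtain ⟨z₂, h₂, inner, hdec⟩ :=
        SimpleGraph.Walk.exists_eq_cons_of_ne (by simp) rest.reverse
      rcases z₂ with _ | ⟨i₂, r₂⟩
      · exact h₂
      · have hr₂ : r₂ = rt i₂ := h₂
        subst hr₂
        have hnodup2 : ((none : Option (Σ i, N i)) :: inner.support).Nodup := by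
          rw [← SimpleGraph.Walk.support_cons h₂, ← hdec, SimpleGraph.Walk.support_reverse]
          exact List.nodup_reverse.2 hrest_nodup
        have hni : none ∉ inner.support := (List.nodup_cons.1 hnodup2).1
        have hib : i₂ = i := glue_sameBranch T rt inner rfl rfl hni
        subst hib
        have he : s(none, some (⟨i₂, rt i₂⟩ : Σ i, N i)) ∈ rest.edges := by
          have h1 : s(none, some (⟨i₂, rt i₂⟩ : Σ i, N i)) ∈ rest.reverse.edges := by
            rw [hdec, SimpleGraph.Walk.edges_cons]
            exact List.mem_cons_self
          rw [SimpleGraph.Walk.edges_reverse, List.mem_reverse] at h1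
          exact h1
        have hnod := hc.isCircuit.isTrail.edges_nodup
        rw [SimpleGraph.Walk.edges_cons] at hnod
        exact (List.nodup_cons.1 hnod).1 he

lemma glue_isAcyclic (hT : ∀ i, (T i).IsAcyclic) : (glue T rt).IsAcyclic := by
  classical
  intro v c hc
  by_cases hnone : none ∈ c.support
  · exact glue_no_center_cycle T rt hT (c.rotate none hnone) (hc.rotate hnone)
  · have hv : v ≠ none := fun hv => hnone (hv ▸ c.start_mem_support)
    obtain ⟨⟨i, s⟩, rfl⟩ := Option.ne_none_iff_exists'.1 hv
    obtain ⟨t, w', hy, hsup, hedg⟩ := glue_reflect T rt c rfl hnone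
    have hts : t = s := by
      have := (Sigma.mk.inj_iff.1 (Option.some_injective _ hy)).2
      exact (eq_of_heq this).symm
    subst hts
    refine hT i w' ⟨⟨⟨?_⟩, ?_⟩, ?_⟩
    · have := hc.isCircuit.isTrail.edges_nodup
      rw [hedg] at this
      exact this.of_map _
    · intro h0
      have h3 := hc.three_le_length
      rw [← SimpleGraph.Walk.length_edges, hedg, List.length_map,
        SimpleGraph.Walk.length_edges, h0] at h3
      simp at h3
    · have := hc.support_nodup
      rw [hsup, ← List.map_tail] at this
      exact this.of_map _

lemma glue_isTree (hT : ∀ i, (T i).IsTree) : (glue T rt).IsTree :=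
  ⟨glue_connected T rt (fun i => (hT i).isConnected),
   glue_isAcyclic T rt (fun i => (hT i).IsAcyclic)⟩



end Glue

/-! #### Conjunctions of countably many infinite CQs -/

section Conj

variable {σ : Schema} {n : ℕ}

lemma atom_countable : Countable (Atom σ ℕ) := by
  haveI := σ.rel_finite
  haveI : Countable σ.Rel := Finite.to_countable
  exact Countable.of_equiv (Σ r : σ.Rel, (Fin (σ.arity r) → ℕ))
    { toFun := fun p => ⟨p.1, p.2⟩
      invFun := fun f => ⟨f.rel, f.args⟩
      left_inv := fun p => rfl
      right_inv := fun f => rfl }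

variable {I : Type} (Q : I → CQI σ n)

/-- identifications forced on the free tuple by the conjuncts -/
def conjSetoid : Setoid (Fin n) :=
  Relation.EqvGen.setoid (fun i j => ∃ ii : I, (Q ii).free i = (Q ii).free j)

/-- variables of the conjunction -/
abbrev ConjVar : Type := (Σ i : I, (Q i).Var) ⊕ Quotient (conjSetoid Q)

/-- embedding of the variables of a conjunct -/
noncomputable def conjMap (i : I) (v : (Q i).Var) : ConjVar Q :=
  @dite _ (∃ j, (Q i).free j = v) (Classical.propDecidable _)
    (fun h => Sum.inr (Quotient.mk (conjSetoid Q) h.choose)) (fun _ => Sum.inl ⟨i, v⟩)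

/-- the conjunction of a countable family of (infinitary) CQs -/
noncomputable abbrev conj [Countable I] : CQI σ n where
  Var := ConjVar Q
  atoms := ⋃ i : I, (Atom.map (conjMap Q i)) '' (Q i).atoms
  free := fun j => Sum.inr (Quotient.mk (conjSetoid Q) j)
  ctblAtoms := Set.countable_iUnion (fun i => ((Q i).ctblAtoms).image _)

variable [Countable I]

lemma conjMap_free (i : I) (j : Fin n) :
    conjMap Q i ((Q i).free j) = Sum.inr (Quotient.mk (conjSetoid Q) j) := by
  have h : ∃ j', (Q i).free j' = (Q i).free j := ⟨j, rfl⟩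
  rw [conjMap, dif_pos h]
  exact congrArg _ (Quotient.sound (Relation.EqvGen.rel _ _ ⟨i, h.choose_spec⟩))

lemma conjMap_not_free (i : I) {v : (Q i).Var} (hv : v ∉ Set.range (Q i).free) :
    conjMap Q i v = Sum.inl ⟨i, v⟩ := by
  rw [conjMap, dif_neg]
  rintro ⟨j, hj⟩
  exact hv ⟨j, hj⟩

lemma conjMap_inl {i : I} {v : (Q i).Var} {p : Σ i : I, (Q i).Var}
    (h : conjMap Q i v = Sum.inl p) : p = ⟨i, v⟩ := by
  by_cases hv : ∃ j, (Q i).free j = v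
  · rw [conjMap, dif_pos hv] at h; exact absurd h (by simp)
  · rw [conjMap, dif_neg hv] at h
    exact (Sum.inl_injective h).symm

lemma atom_map_map {α β γ : Type} {σ' : Schema} (f : Atom σ' α) (g : α → β) (h : β → γ) :
    (f.map g).map h = f.map (h ∘ g) := rfl

lemma conj_eval {D : DB σ ℕ} {a : Fin n → ℕ} :
    a ∈ (conj Q).eval D ↔ (∀ j, a j ∈ adom D) ∧ ∀ i, HomTup (Q i).atoms (Q i).free D a := by
  constructor
  · rintro ⟨hadom, H, hhom, hfree⟩
    refine ⟨hadom, fun i => ⟨H ∘ conjMap Q i, fun f hf => ?_, fun j => ?_⟩⟩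
    · have : (Atom.map (conjMap Q i) f).map H ∈ D := by
        apply hhom
        exact Set.mem_iUnion.2 ⟨i, Set.mem_image_of_mem _ hf⟩
      exact this
    · rw [Function.comp_apply, conjMap_free]
      exact hfree j
  · rintro ⟨hadom, hH⟩
    choose h hhom hfree using hH
    have hsound : ∀ i j : Fin n, (conjSetoid Q).r i j → a i = a j := by
      intro i j hij
      induction hij with
      | rel x y hxy => obtain ⟨ii, hii⟩ := hxy; rw [← hfree ii x, ← hfree ii y, hii]
      | refl => rfl
      | symm x y _ ih => exact ih.symm
      | trans x y z _ _ ih1 ih2 => exact ih1.trans ih2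
    refine ⟨hadom, Sum.elim (fun p => h p.1 p.2) (Quotient.lift a hsound), ?_, fun j => rfl⟩
    rintro f hf
    have hf' : f ∈ ⋃ i : I, (Atom.map (conjMap Q i)) '' (Q i).atoms := hf
    clear hf
    rw [Set.mem_iUnion] at hf'
    obtain ⟨i, hf⟩ := hf'
    rw [Set.mem_image] at hf
    obtain ⟨g, hg, rfl⟩ := hf
    rw [atom_map_map]
    have hcomp : ∀ v : (Q i).Var,
        (Sum.elim (fun p : Σ i : I, (Q i).Var => h p.1 p.2)
          (Quotient.lift a hsound)) (conjMap Q i v) = h i v := by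
      intro v
      by_cases hv : ∃ j, (Q i).free j = v
      · obtain ⟨j, rfl⟩ := hv
        rw [conjMap_free]
        exact (hfree i j).symm
      · rw [conjMap_not_free Q i (fun ⟨j, hj⟩ => hv ⟨j, hj⟩)]
        rfl
    have : Atom.map ((Sum.elim (fun p : Σ i : I, (Q i).Var => h p.1 p.2)
        (Quotient.lift a hsound)) ∘ conjMap Q i) g = Atom.map (h i) g := by
      unfold Atom.map
      congr 1
      funext jj
      exact hcomp (g.args jj)
    rw [this]
    exact hhom i g hg

lemma le_conj {q0 : CQI σ n} (h : ∀ i, q0.le (Q i)) : q0.le (conj Q) := by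
  intro D hD a ha
  exact (conj_eval (Q := Q)).2 ⟨ha.1, fun i => (h i D hD ha).2⟩

end Conj

end Overapprox
namespace Overapprox

section Ghw

variable {σ : Schema} {n : ℕ} {I : Type} (Q : I → CQI σ n) [Countable I]

lemma mem_adom_iff {α : Type} {D : DB σ α} {x : α} :
    x ∈ adom D ↔ ∃ f ∈ D, ∃ j, f.args j = x := by
  simp [adom, Set.mem_iUnion, Set.mem_range, eq_comm]

lemma connected_induce_image {V W : Type} {G : SimpleGraph V} {H : SimpleGraph W}
    (f : V → W) (hadj : ∀ a b, G.Adj a b → H.Adj (f a) (f b)) {A : Set V}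
    (hc : (SimpleGraph.induce A G).Connected) {B : Set W} (hB : B = f '' A) :
    (SimpleGraph.induce B H).Connected := by
  subst hB
  refine SimpleGraph.Connected.map
    (G := SimpleGraph.induce A G) (H := SimpleGraph.induce (f '' A) H)
    ⟨fun v => ⟨f v.1, ⟨v.1, v.2, rfl⟩⟩, ?_⟩ ?_ hc
  · intro a b hab
    exact hadj _ _ hab
  · rintro ⟨w, v, hv, rfl⟩
    exact ⟨⟨v, hv⟩, rfl⟩

lemma connected_of_subsingleton {V : Type} (G : SimpleGraph V) [Subsingleton V]
    (h : Nonempty V) : G.Connected := by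
  haveI := h
  exact ⟨fun a b => by rw [Subsingleton.elim a b]⟩

lemma conjMap_mem_existVars {i : I} {v : (Q i).Var} (hv : v ∈ (Q i).existVars) :
    conjMap Q i v = Sum.inl ⟨i, v⟩ ∧ conjMap Q i v ∈ (conj Q).existVars := by
  obtain ⟨hva, hvf⟩ := hv
  have heq : conjMap Q i v = Sum.inl ⟨i, v⟩ := conjMap_not_free Q i hvf
  refine ⟨heq, ?_, ?_⟩
  · obtain ⟨f, hf, jj, hjj⟩ := mem_adom_iff.1 hva
    refine mem_adom_iff.2 ⟨Atom.map (conjMap Q i) f,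
      Set.mem_iUnion.2 ⟨i, Set.mem_image_of_mem _ hf⟩, jj, ?_⟩
    show conjMap Q i (f.args jj) = _
    rw [hjj]
  · rintro ⟨j, hj⟩
    rw [heq] at hj
    exact absurd hj (by simp [conj])

lemma existVars_conj_inv {y : (conj Q).Var} (hy : y ∈ (conj Q).existVars) :
    ∃ (i : I) (v : (Q i).Var), y = Sum.inl ⟨i, v⟩ ∧ v ∈ (Q i).existVars ∧
      conjMap Q i v = y := by
  obtain ⟨hya, hyf⟩ := hy
  obtain ⟨f, hf, jj, hjj⟩ := mem_adom_iff.1 hya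
  have hf' : f ∈ ⋃ i : I, (Atom.map (conjMap Q i)) '' (Q i).atoms := hf
  rw [Set.mem_iUnion] at hf'
  obtain ⟨i, hf'⟩ := hf'
  rw [Set.mem_image] at hf'
  obtain ⟨g, hg, rfl⟩ := hf'
  have hjj' : conjMap Q i (g.args jj) = y := hjj
  set v := g.args jj with hv
  have hvnf : v ∉ Set.range (Q i).free := by
    rintro ⟨j, hj⟩
    apply hyf
    rw [← hjj', ← hj, conjMap_free]
    exact ⟨j, rfl⟩
  have heq : conjMap Q i v = Sum.inl ⟨i, v⟩ := conjMap_not_free Q i hvnf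
  refine ⟨i, v, by rw [← hjj', heq], ⟨?_, hvnf⟩, hjj'⟩
  exact mem_adom_iff.2 ⟨g, hg, jj, rfl⟩

lemma conj_ghw {k : ℕ} (h : ∀ i, (Q i).ghwLE k) : (conj Q).ghwLE k := by
  classical
  choose td hw using h
  haveI hne : ∀ i, Nonempty (td i).node := fun i => (td i).isTree.isConnected.nonempty
  let rt : ∀ i, (td i).node := fun i => Classical.arbitrary _
  let bagA : Option (Σ i, (td i).node) → Set (conj Q).Var := fun t =>
    match t with
    | none => ∅
    | some ⟨i, s⟩ => conjMap Q i '' (td i).bag s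
  refine ⟨⟨Option (Σ i, (td i).node), glue (fun i => (td i).T) rt,
    glue_isTree _ _ (fun i => (td i).isTree), bagA, ?_, ?_, ?_⟩, ?_⟩
  · -- bag_sub
    rintro (_ | ⟨i, s⟩)
    · exact Set.empty_subset _
    · rintro y ⟨v, hv, rfl⟩
      exact (conjMap_mem_existVars Q ((td i).bag_sub s hv)).2
  · -- covers
    intro f hf
    have hf' : f ∈ ⋃ i : I, (Atom.map (conjMap Q i)) '' (Q i).atoms := hf
    rw [Set.mem_iUnion] at hf'
    obtain ⟨i, hf'⟩ := hf'
    rw [Set.mem_image] at hf'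
    obtain ⟨g, hg, rfl⟩ := hf'
    obtain ⟨t, ht⟩ := (td i).covers g hg
    refine ⟨some ⟨i, t⟩, ?_⟩
    rintro x ⟨⟨jj, hjj⟩, hxE⟩
    have hx : conjMap Q i (g.args jj) = x := hjj
    set v := g.args jj with hvdef
    have hvnf : v ∉ Set.range (Q i).free := by
      rintro ⟨j, hj⟩
      apply hxE.2
      rw [← hx, ← hj, conjMap_free]
      exact ⟨j, rfl⟩
    have hvE : v ∈ (Q i).existVars :=
      ⟨mem_adom_iff.2 ⟨g, hg, jj, rfl⟩, hvnf⟩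
    have hvbag : v ∈ (td i).bag t := ht ⟨⟨jj, rfl⟩, hvE⟩
    exact ⟨v, hvbag, hx⟩
  · -- conn
    intro y hy
    obtain ⟨i, v, rfl, hvE, hvmap⟩ := existVars_conj_inv Q hy
    refine connected_induce_image (fun s => (some ⟨i, s⟩ : Option (Σ i, (td i).node)))
      (fun a b hab => glue_adj_of _ _ hab) ((td i).conn v hvE) ?_
    ext t
    constructor
    · intro ht
      match t with
      | none => exact absurd ht (by simp [bagA])
      | some ⟨j, s⟩ =>
        obtain ⟨u, hu, huy⟩ := ht
        obtain ⟨hij, hvu⟩ := Sigma.mk.inj_iff.1 (conjMap_inl Q huy)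
        subst hij
        have : u = v := (eq_of_heq hvu).symm
        subst this
        exact ⟨s, hu, rfl⟩
    · rintro ⟨s, hs, rfl⟩
      exact ⟨v, hs, hvmap⟩
  · -- width
    rintro (_ | ⟨i, s⟩)
    · exact ⟨∅, by simp, by simp, by simp [bagA]⟩
    · obtain ⟨S, hS, hcard, hcov⟩ := hw i s
      refine ⟨S.image (Atom.map (conjMap Q i)), ?_, ?_, ?_⟩
      · intro f hf
        rw [Finset.coe_image] at hf
        obtain ⟨g, hg, rfl⟩ := hf
        exact Set.mem_iUnion.2 ⟨i, Set.mem_image_of_mem _ (hS hg)⟩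
      · exact (Finset.card_image_le).trans hcard
      · rintro x ⟨u, hu, rfl⟩
        have hcu := hcov hu
        rw [Set.mem_iUnion₂] at hcu
        obtain ⟨g, hgS, jj, hjj⟩ := hcu
        rw [Set.mem_iUnion₂]
        refine ⟨Atom.map (conjMap Q i) g, ?_, jj, ?_⟩
        · rw [Finset.coe_image]
          exact Set.mem_image_of_mem _ hgS
        · show conjMap Q i (g.args jj) = _
          rw [hjj]

end Ghw

end Overapprox
namespace Overapprox

section Single

variable {σ : Schema} {n : ℕ} (q : CQ σ n)

/-- the single-atom subquery of `q` determined by an atom `f` -/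
abbrev singleQ (f : Atom σ q.Var) : CQI σ n :=
  ⟨q.Var, {f}, q.free, Set.countable_singleton _⟩

lemma le_singleQ {f : Atom σ q.Var} (hf : f ∈ q.atoms) : q.toI.le (singleQ q f) := by
  rintro D hD a ⟨hadom, h, hhom, hfree⟩
  refine ⟨hadom, h, ?_, hfree⟩
  intro g hg
  have hg' : g ∈ ({f} : Set (Atom σ q.Var)) := hg
  rw [Set.mem_singleton_iff] at hg'
  rw [hg']
  exact hhom f hf

lemma singleQ_ghw {k : ℕ} (hk : 1 ≤ k) (f : Atom σ q.Var) : (singleQ q f).ghwLE k := by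
  classical
  refine ⟨⟨Unit, ⊥, ⟨connected_of_subsingleton _ ⟨()⟩, SimpleGraph.isAcyclic_bot⟩,
    fun _ => (singleQ q f).existVars, fun _ => subset_rfl, ?_, ?_⟩, ?_⟩
  · intro g _
    exact ⟨(), Set.inter_subset_right⟩
  · intro y hy
    exact connected_of_subsingleton _ ⟨⟨(), hy⟩⟩
  · intro t
    refine ⟨{f}, ?_, ?_, ?_⟩
    · intro g hg
      rw [Finset.coe_singleton] at hg
      exact hg
    · simpa using hk
    · intro x hx
      obtain ⟨g, hg, jj, hjj⟩ := mem_adom_iff.1 hx.1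
      have hg' : g ∈ ({f} : Set (Atom σ q.Var)) := hg
      rw [Set.mem_singleton_iff] at hg'
      rw [Set.mem_iUnion₂]
      exact ⟨g, by simp [hg'], jj, hjj⟩

end Single

section Main

variable {σ : Schema} {n : ℕ}

/-- the behavior of a CQ on finite databases -/
def Trace (q' : CQI σ n) : Set (Set (Atom σ ℕ) × (Fin n → ℕ)) :=
  {p | p.1.Finite ∧ p.2 ∈ q'.eval p.1}

lemma le_iff {q1 q2 : CQI σ n} : q1.le q2 ↔ Trace q1 ⊆ Trace q2 := by
  constructor
  · rintro h p ⟨hfin, hev⟩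
    exact ⟨hfin, h p.1 hfin hev⟩
  · intro h D hD a ha
    exact (h (show (D, a) ∈ Trace q1 from ⟨hD, ha⟩)).2

lemma countable_finitePairs :
    ({p : Set (Atom σ ℕ) × (Fin n → ℕ) | p.1.Finite}).Countable := by
  haveI := atom_countable (σ := σ)
  have h0 := Set.countable_setOf_finite_subset (Set.countable_univ (α := Atom σ ℕ))
  have hsub : {D : Set (Atom σ ℕ) | D.Finite}
      ⊆ {t : Set (Atom σ ℕ) | Set.Finite t ∧ t ⊆ Set.univ} :=
    fun t ht => ⟨ht, Set.subset_univ _⟩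
  have h1 : ({D : Set (Atom σ ℕ) | D.Finite}).Countable :=
    Set.Countable.mono hsub h0
  have h2 : {p : Set (Atom σ ℕ) × (Fin n → ℕ) | p.1.Finite}
      = {D : Set (Atom σ ℕ) | D.Finite} ×ˢ Set.univ := by
    ext p
    simp [Set.mem_prod]
  rw [h2]
  exact h1.prod Set.countable_univ

end Main

end Overapprox
/-- Every CQ has a `GHW(k)^∞`-overapproximation: some `q' ∈ GHW(k)^∞` with
`q ⊆ q'` such that no `q'' ∈ GHW(k)^∞` satisfies `q ⊆ q'' ⊆ q'` and
`q' ⊄ q''` (containment is with respect to finite databases only). -/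
theorem statement8 (σ : Schema) (k : ℕ) (hk : 1 ≤ k) (n : ℕ) (q : CQ σ n) :
    ∃ q' : CQI σ n, q'.ghwLE k ∧ q.toI.le q' ∧
      ¬ ∃ q'' : CQI σ n, q''.ghwLE k ∧ q.toI.le q'' ∧ q''.le q' ∧
        ¬ q'.le q'' := by
  classical
  haveI := q.finAtoms.to_subtype
  -- the fully decoupled query: conjunction of the single-atom subqueries of `q`
  let q1A : CQI σ n := Overapprox.conj (fun f : ↥q.atoms => Overapprox.singleQ q f.1)
  have hq1g : q1A.ghwLE k :=
    Overapprox.conj_ghw _ (fun f => Overapprox.singleQ_ghw q hk f.1)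
  have hq1le : q.toI.le q1A :=
    Overapprox.le_conj _ (fun f => Overapprox.le_singleQ q f.2)
  -- the set of traces of GHW(k)^∞ queries containing q
  let S : Set (Set (Set (Atom σ ℕ) × (Fin n → ℕ))) :=
    {tr | ∃ q'' : CQI σ n, q''.ghwLE k ∧ q.toI.le q'' ∧ Overapprox.Trace q'' = tr}
  have hchain : ∀ c ⊆ S, IsChain (· ⊆ ·) c → ∃ lb ∈ S, ∀ s ∈ c, lb ⊆ s := by
    intro c hcS _
    rcases Set.eq_empty_or_nonempty c with rfl | ⟨tr₀, htr₀⟩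
    · exact ⟨Overapprox.Trace q1A, ⟨q1A, hq1g, hq1le, rfl⟩,
        fun s hs => absurd hs (Set.notMem_empty s)⟩
    · have hXc := Overapprox.countable_finitePairs (σ := σ) (n := n)
      have hg : ∀ p : Set (Atom σ ℕ) × (Fin n → ℕ),
          ∃ tr, tr ∈ c ∧ (p ∉ ⋂₀ c → p ∉ tr) := by
        intro p
        by_cases hp : p ∈ ⋂₀ c
        · exact ⟨tr₀, htr₀, fun h => absurd hp h⟩
        · rw [Set.mem_sInter] at hp
          push_neg at hp
          obtain ⟨tr, htr, hptr⟩ := hp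
          exact ⟨tr, htr, fun _ => hptr⟩
      choose g hgc hgx using hg
      let J : Set (Set (Set (Atom σ ℕ) × (Fin n → ℕ))) :=
        insert tr₀ (g '' {p | p.1.Finite})
      have hJc : J.Countable := (hXc.image g).insert tr₀
      have hJsub : J ⊆ c := by
        intro tr htr
        simp only [J, Set.mem_insert_iff, Set.mem_image] at htr
        rcases htr with rfl | ⟨p, _, rfl⟩
        · exact htr₀
        · exact hgc p
      haveI : Countable ↥J := hJc.to_subtype
      have hreal : ∀ j : ↥J, ∃ Qj : CQI σ n,
          Qj.ghwLE k ∧ q.toI.le Qj ∧ Overapprox.Trace Qj = j.1 :=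
        fun j => hcS (hJsub j.2)
      choose Qf hQg hQle hQtr using hreal
      refine ⟨Overapprox.Trace (Overapprox.conj Qf),
        ⟨Overapprox.conj Qf, Overapprox.conj_ghw _ hQg, Overapprox.le_conj _ hQle, rfl⟩, ?_⟩
      intro s hs p hp
      obtain ⟨hpfin, hpev⟩ := hp
      obtain ⟨hadom, hHom⟩ := (Overapprox.conj_eval (Q := Qf)).1 hpev
      have hall : ∀ j : ↥J, p ∈ j.1 := by
        intro j
        rw [← hQtr j]
        exact ⟨hpfin, hadom, hHom j⟩
      by_cases hpc : p ∈ ⋂₀ c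
      · exact hpc s hs
      · have hmem : g p ∈ J :=
          Set.mem_insert_of_mem _ ⟨p, hpfin, rfl⟩
        exact absurd (hall ⟨g p, hmem⟩) (hgx p hpc)
  obtain ⟨m, hm⟩ := zorn_superset S hchain
  obtain ⟨q', hg', hle', htr⟩ := hm.1
  refine ⟨q', hg', hle', ?_⟩
  rintro ⟨q'', hg'', hqle'', hle'', hnot⟩
  apply hnot
  have h1 : Overapprox.Trace q'' ⊆ m := htr ▸ (Overapprox.le_iff.1 hle'')
  have h2 : m ⊆ Overapprox.Trace q'' := hm.2 ⟨q'', hg'', hqle'', rfl⟩ h1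
  exact Overapprox.le_iff.2 (htr ▸ h2)
end

section
/- Let q be a connected Boolean CQ in GHW(1) over a schema of maximum arity two that is a core, and let u and v be variables of q. Then there is at most one endomorphism of q mapping u to v. -/
section AuxProof

open Set SimpleGraph

variable {σ : Schema}

lemma mem_adom_iff {α : Type} {D : DB σ α} {z : α} :
    z ∈ adom D ↔ ∃ f ∈ D, z ∈ Set.range f.args := by
  simp [adom]

lemma adom_finite {α : Type} {D : DB σ α} (hD : D.Finite) : (adom D).Finite :=
  hD.biUnion (fun f _ => Set.finite_range f.args)

lemma existVars_eq (q : CQ σ 0) : q.existVars = adom q.atoms := by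
  unfold CQ.existVars
  rw [Set.range_eq_empty q.free, Set.diff_empty]

lemma mapsTo_adom {q : CQ σ 0} {h : q.Var → q.Var} (hh : IsHom h q.atoms q.atoms) :
    Set.MapsTo h (adom q.atoms) (adom q.atoms) := by
  rintro z hz
  obtain ⟨f, hf, i, rfl⟩ := mem_adom_iff.mp hz
  exact mem_adom_iff.mpr ⟨f.map h, hh f hf, i, rfl⟩

lemma injOn_atoms {q : CQ σ 0} (hcore : IsCore q) {h : q.Var → q.Var}
    (hh : IsHom h q.atoms q.atoms) : Set.InjOn (Atom.map h) q.atoms := by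
  by_contra hinj
  rw [Set.InjOn] at hinj; push_neg at hinj
  obtain ⟨f0, hf0, f1, hf1, heq, hne⟩ := hinj
  have hfin := q.finAtoms
  set q' : CQ σ 0 := ⟨q.Var, Atom.map h '' q.atoms, q.free, hfin.image _⟩ with hq'
  have hd1 : HomTup q.atoms q.free q'.atoms q'.free :=
    ⟨h, fun f hf => Set.mem_image_of_mem _ hf, fun i => i.elim0⟩
  have hd2 : HomTup q'.atoms q'.free q.atoms q.free := by
    refine ⟨id, ?_, fun i => i.elim0⟩
    rintro f ⟨g, hg, rfl⟩
    exact hh g hg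
  have hc := hcore q' hd1 hd2
  have himg : Atom.map h '' q.atoms = Atom.map h '' (q.atoms \ {f1}) := by
    apply Set.Subset.antisymm
    · rintro f ⟨g, hg, rfl⟩
      by_cases hgf : g = f1
      · exact ⟨f0, ⟨hf0, by simp [hne]⟩, by rw [hgf, ← heq]⟩
      · exact ⟨g, ⟨hg, by simp [hgf]⟩, rfl⟩
    · exact Set.image_mono Set.diff_subset
  have hlt : (Atom.map h '' q.atoms).ncard < q.atoms.ncard := by
    rw [himg]
    calc (Atom.map h '' (q.atoms \ {f1})).ncard ≤ (q.atoms \ {f1}).ncard :=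
          Set.ncard_image_le (hfin.diff)
      _ < q.atoms.ncard := Set.ncard_diff_singleton_lt_of_mem hf1 hfin
  have : q'.atoms.ncard = (Atom.map h '' q.atoms).ncard := rfl
  omega

lemma bijOn_atoms {q : CQ σ 0} (hcore : IsCore q) {h : q.Var → q.Var}
    (hh : IsHom h q.atoms q.atoms) : Set.BijOn (Atom.map h) q.atoms q.atoms :=
  (q.finAtoms.injOn_iff_bijOn_of_mapsTo (fun f hf => hh f hf)).mp (injOn_atoms hcore hh)

lemma surjOn_adom {q : CQ σ 0} (hcore : IsCore q) {h : q.Var → q.Var}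
    (hh : IsHom h q.atoms q.atoms) : Set.SurjOn h (adom q.atoms) (adom q.atoms) := by
  rintro z hz
  obtain ⟨f, hf, i, rfl⟩ := mem_adom_iff.mp hz
  obtain ⟨g, hg, hgf⟩ := (bijOn_atoms hcore hh).surjOn hf
  subst hgf
  exact ⟨g.args i, mem_adom_iff.mpr ⟨g, hg, i, rfl⟩, rfl⟩

lemma injOn_adom {q : CQ σ 0} (hcore : IsCore q) {h : q.Var → q.Var}
    (hh : IsHom h q.atoms q.atoms) : Set.InjOn h (adom q.atoms) :=
  (((adom_finite q.finAtoms).surjOn_iff_bijOn_of_mapsTo (mapsTo_adom hh)).mp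
    (surjOn_adom hcore hh)).injOn

lemma ishom_comp {α : Type} {D : DB σ α} {g h : α → α}
    (hg : IsHom g D D) (hh : IsHom h D D) : IsHom (g ∘ h) D D :=
  fun f hf => hg (f.map h) (hh f hf)

lemma ishom_iter {α : Type} {D : DB σ α} {h : α → α} (hh : IsHom h D D) :
    ∀ m, IsHom (h^[m]) D D := by
  intro m
  induction m with
  | zero => exact fun f hf => hf
  | succ m ih =>
    rw [Function.iterate_succ']
    exact ishom_comp hh ih

lemma exists_iter_fix {q : CQ σ 0} (hcore : IsCore q) {h : q.Var → q.Var}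
    (hh : IsHom h q.atoms q.atoms) :
    ∃ m, 0 < m ∧ ∀ z ∈ adom q.atoms, h^[m] z = z := by
  have hfin : (adom q.atoms).Finite := adom_finite q.finAtoms
  haveI := hfin.to_subtype
  have hmt := mapsTo_adom hh
  set φ : ↥(adom q.atoms) → ↥(adom q.atoms) := fun z => ⟨h z, hmt z.2⟩ with hφ
  have hinj : Function.Injective φ := by
    rintro ⟨a, ha⟩ ⟨b, hb⟩ hab
    have := injOn_adom hcore hh ha hb (congrArg Subtype.val hab)
    exact Subtype.ext this
  have hbij := Finite.injective_iff_bijective.mp hinj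
  set ψ := Equiv.ofBijective φ hbij with hψdef
  have hψ : ∀ (m : ℕ) (z : ↥(adom q.atoms)), ((ψ ^ m) z).val = h^[m] z.val := by
    intro m
    induction m with
    | zero => intro z; simp
    | succ m ih =>
      intro z
      rw [pow_succ, Equiv.Perm.mul_apply, Function.iterate_succ_apply]
      have : (ψ z).val = h z.val := rfl
      rw [ih (ψ z), this]
  refine ⟨orderOf ψ, orderOf_pos ψ, ?_⟩
  intro z hz
  have := hψ (orderOf ψ) ⟨z, hz⟩
  rw [pow_orderOf_eq_one] at this
  simpa using this.symm

lemma range_small {α : Type} (harity : ∀ R : σ.Rel, σ.arity R ≤ 2) (f : Atom σ α)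
    {p x b : α} (hp : p ∈ Set.range f.args) (hx : x ∈ Set.range f.args)
    (hb : b ∈ Set.range f.args) (hpx : p ≠ x) : b = p ∨ b = x := by
  obtain ⟨i, rfl⟩ := hb
  obtain ⟨j, rfl⟩ := hp
  obtain ⟨k, rfl⟩ := hx
  have har := harity f.rel
  by_contra hcon
  push_neg at hcon
  have hij : i ≠ j := fun e => hcon.1 (by rw [e])
  have hik : i ≠ k := fun e => hcon.2 (by rw [e])
  have hjk : j ≠ k := fun e => hpx (by rw [e])
  have h1 : (i : ℕ) ≠ (j : ℕ) := fun e => hij (Fin.ext e)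
  have h2 : (i : ℕ) ≠ (k : ℕ) := fun e => hik (Fin.ext e)
  have h3 : (j : ℕ) ≠ (k : ℕ) := fun e => hjk (Fin.ext e)
  have := i.isLt; have := j.isLt; have := k.isLt
  omega

lemma bag_two {V : Type} (harity : ∀ R : σ.Rel, σ.arity R ≤ 2) {A : DB σ V} {E : Set V}
    (td : TreeDecomp A E) (hw : td.widthLE 1) (t : td.node)
    {p x b : V} (hp : p ∈ td.bag t) (hx : x ∈ td.bag t) (hb : b ∈ td.bag t)
    (hpx : p ≠ x) : b = p ∨ b = x := by
  obtain ⟨S, hSA, hS1, hSb⟩ := hw t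
  have hmem : ∀ c ∈ td.bag t, ∃ f ∈ S, c ∈ Set.range f.args := by
    intro c hc
    have := hSb hc
    simpa using this
  obtain ⟨f, hfS, hpf⟩ := hmem p hp
  obtain ⟨f', hf'S, hxf⟩ := hmem x hx
  obtain ⟨f'', hf''S, hbf⟩ := hmem b hb
  have e1 : f' = f := Finset.card_le_one.mp hS1 _ hf'S _ hfS
  have e2 : f'' = f := Finset.card_le_one.mp hS1 _ hf''S _ hfS
  rw [e1] at hxf
  rw [e2] at hbf
  exact range_small harity f hpf hxf hbf hpx

section TreeSide

variable {N : Type} {T : SimpleGraph N} {u v : N}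

lemma side_total (hc : T.Connected) (a : N) :
    (T.deleteEdges {s(u, v)}).Reachable a u ∨ (T.deleteEdges {s(u, v)}).Reachable a v := by
  suffices haux : ∀ {a b : N}, T.Walk a b →
      ((T.deleteEdges {s(u, v)}).Reachable b u ∨ (T.deleteEdges {s(u, v)}).Reachable b v) →
      ((T.deleteEdges {s(u, v)}).Reachable a u ∨ (T.deleteEdges {s(u, v)}).Reachable a v) by
    obtain ⟨w⟩ := hc.preconnected a u
    exact haux w (Or.inl (Reachable.refl u))
  intro a b w
  induction w with
  | nil => exact id
  | @cons a c b h w ih =>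
    intro hb
    by_cases he : s(a, c) = s(u, v)
    · rcases Sym2.eq_iff.mp he with ⟨rfl, rfl⟩ | ⟨rfl, rfl⟩
      · exact Or.inl (Reachable.refl _)
      · exact Or.inr (Reachable.refl _)
    · have hadj : (T.deleteEdges {s(u, v)}).Adj a c := deleteEdges_adj.mpr ⟨h, by simpa using he⟩
      rcases ih hb with hcu | hcv
      · exact Or.inl (hadj.reachable.trans hcu)
      · exact Or.inr (hadj.reachable.trans hcv)

lemma side_disj (hT : T.IsTree) (hadj : T.Adj u v) :
    ¬ (T.deleteEdges {s(u, v)}).Reachable u v := by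
  have hb := (isAcyclic_iff_forall_adj_isBridge.mp hT.IsAcyclic) hadj
  rw [isBridge_iff] at hb
  exact hb

lemma walk_cross (hT : T.IsTree) {a b : N} (w : T.Walk a b) :
    (T.deleteEdges {s(u, v)}).Reachable a u →
    ¬ (T.deleteEdges {s(u, v)}).Reachable b u →
    u ∈ w.support ∧ v ∈ w.support := by
  induction w with
  | nil => exact fun ha hb => absurd ha hb
  | @cons a c b h w ih =>
    intro ha hb
    by_cases he : s(a, c) = s(u, v)
    · rcases Sym2.eq_iff.mp he with ⟨rfl, rfl⟩ | ⟨rfl, rfl⟩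
      · exact ⟨by simp, by simp [Walk.support_cons, Walk.start_mem_support]⟩
      · exact ⟨by simp [Walk.support_cons, Walk.start_mem_support], by simp⟩
    · have hadj : (T.deleteEdges {s(u, v)}).Adj a c := deleteEdges_adj.mpr ⟨h, by simpa using he⟩
      have hres := ih (hadj.symm.reachable.trans ha) hb
      exact ⟨List.mem_cons_of_mem _ hres.1, List.mem_cons_of_mem _ hres.2⟩

lemma induced_walk {s : Set N} :
    ∀ {a b : ↥s}, (SimpleGraph.induce s T).Walk a b →
      ∃ w : T.Walk a.val b.val, ∀ n ∈ w.support, n ∈ s := by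
  intro a b w
  induction w with
  | nil => exact ⟨Walk.nil, by simpa using a.2⟩
  | @cons a c _ h w ih =>
    obtain ⟨w', hw'⟩ := ih
    refine ⟨Walk.cons h w', ?_⟩
    intro n hn
    rcases List.mem_cons.mp hn with rfl | hn
    · exact a.2
    · exact hw' n hn

lemma find_edge (P : N → Prop) :
    ∀ {a b : N} (w : T.Walk a b), w.IsPath → P a → ¬ P b →
      ∃ (u' v' : N) (w2 : T.Walk v' b), T.Adj u' v' ∧ P u' ∧ ¬ P v' ∧
        u' ∈ w.support ∧ (∀ n ∈ w2.support, n ∈ w.support) ∧ u' ∉ w2.support := by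
  intro a b w
  induction w with
  | nil => intro _ hpa hpb; exact absurd hpa hpb
  | @cons a c _ h w ih =>
    intro hp hpa hpb
    by_cases hc : P c
    · obtain ⟨u', v', w2, h1, h2, h3, h4, h5, h6⟩ :=
        ih ((Walk.cons_isPath_iff h w).mp hp).1 hc hpb
      exact ⟨u', v', w2, h1, h2, h3, List.mem_cons_of_mem _ h4,
        fun n hn => List.mem_cons_of_mem _ (h5 n hn), h6⟩
    · refine ⟨a, c, w, h, hpa, hc, by simp, fun n hn => List.mem_cons_of_mem _ hn, ?_⟩
      exact ((Walk.cons_isPath_iff h w).mp hp).2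

end TreeSide

lemma fix_adj (harity : ∀ R : σ.Rel, σ.arity R ≤ 2) (q : CQ σ 0)
    (hghw : q.ghwLE 1) (hcore : IsCore q)
    {g : q.Var → q.Var} (hg : IsHom g q.atoms q.atoms)
    {p x : q.Var} (hpx : p ≠ x)
    (f : Atom σ q.Var) (hf : f ∈ q.atoms) (hpf : p ∈ Set.range f.args)
    (hxf : x ∈ Set.range f.args) (hgp : g p = p) : g x = x := by
  classical
  by_contra hgx
  obtain ⟨td, hw⟩ := hghw
  have hE : q.existVars = adom q.atoms := existVars_eq q
  have hp : p ∈ adom q.atoms := mem_adom_iff.mpr ⟨f, hf, hpf⟩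
  have hx : x ∈ adom q.atoms := mem_adom_iff.mpr ⟨f, hf, hxf⟩
  have hpE : p ∈ q.existVars := by rw [hE]; exact hp
  have hxE : x ∈ q.existVars := by rw [hE]; exact hx
  set x' := g x with hx'def
  have hx'0 : x' ∈ adom q.atoms := mapsTo_adom hg hx
  have hgInj := injOn_adom hcore hg
  have hpx' : p ≠ x' := by
    intro e
    exact hpx (hgInj hp hx (by rw [hgp, ← hx'def, ← e]))
  have hxx' : x ≠ x' := fun e => hgx e.symm
  obtain ⟨t, ht⟩ := td.covers f hf
  have hpt : p ∈ td.bag t := ht ⟨hpf, hpE⟩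
  have hxt : x ∈ td.bag t := ht ⟨hxf, hxE⟩
  have hfg : f.map g ∈ q.atoms := hg f hf
  obtain ⟨t', ht'⟩ := td.covers (f.map g) hfg
  have hx'E : x' ∈ q.existVars := by rw [hE]; exact hx'0
  have hpt' : p ∈ td.bag t' := by
    obtain ⟨i, hi⟩ := hpf
    exact ht' ⟨⟨i, by simp [Atom.map, hi, hgp]⟩, hpE⟩
  have hx't' : x' ∈ td.bag t' := by
    obtain ⟨i, hi⟩ := hxf
    exact ht' ⟨⟨i, by simp [Atom.map, hi, hx'def]⟩, hx'E⟩
  have hxnt' : x ∉ td.bag t' := by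
    intro hmem
    rcases bag_two harity td hw t' hpt' hx't' hmem hpx' with e | e
    · exact hpx e.symm
    · exact hxx' e
  obtain ⟨w0⟩ := (td.conn p hpE).preconnected ⟨t, hpt⟩ ⟨t', hpt'⟩
  obtain ⟨w1, hw1⟩ := induced_walk w0
  set Q := w1.bypass with hQdef
  have hQpath : Q.IsPath := w1.bypass_isPath
  have hQsup : ∀ n ∈ Q.support, p ∈ td.bag n := fun n hn => hw1 n (w1.support_bypass_subset hn)
  obtain ⟨r₀, r₁, w2, hadj, hxr₀, hxr₁, hr₀Q, hw2Q, hr₀w2⟩ :=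
    find_edge (fun n => x ∈ td.bag n) Q hQpath hxt hxnt'
  set T' := td.T.deleteEdges {s(r₀, r₁)} with hT'def
  set A : td.node → Prop := fun n => T'.Reachable n r₀ with hAdef
  have hdisj : ¬ T'.Reachable r₀ r₁ := side_disj td.isTree hadj
  have hpr₀ : p ∈ td.bag r₀ := hQsup _ hr₀Q
  have hpr₁ : p ∈ td.bag r₁ := hQsup _ (hw2Q _ w2.start_mem_support)
  have ht'B : T'.Reachable r₁ t' := by
    refine ⟨w2.toDeleteEdges _ ?_⟩
    intro e he
    simp only [Set.mem_singleton_iff]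
    intro hee
    subst hee
    exact hr₀w2 (w2.fst_mem_support_of_mem_edges he)
  have ht'nA : ¬ A t' := by
    intro hA
    exact hdisj (ht'B.trans hA).symm
  have crossing : ∀ z, z ∈ q.existVars → ∀ n₁ n₂, z ∈ td.bag n₁ → z ∈ td.bag n₂ →
      A n₁ → ¬ A n₂ → z ∈ td.bag r₀ ∧ z ∈ td.bag r₁ := by
    intro z hz n₁ n₂ hb1 hb2 hA1 hA2
    obtain ⟨wz0⟩ := (td.conn z hz).preconnected ⟨n₁, hb1⟩ ⟨n₂, hb2⟩
    obtain ⟨wz, hwz⟩ := induced_walk wz0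
    have hcross := walk_cross td.isTree wz hA1 hA2
    exact ⟨hwz _ hcross.1, hwz _ hcross.2⟩
  have htotal : ∀ n, ¬ A n → T'.Reachable n r₁ := by
    intro n hn
    rcases side_total (u := r₀) (v := r₁) td.isTree.isConnected n with hh | hh
    · exact absurd hh hn
    · exact hh
  set S : Set q.Var := {z | z ∈ adom q.atoms ∧ ∀ n, z ∈ td.bag n → A n} with hSdef
  have hxS : x ∈ S := by
    refine ⟨hx, fun n hn => ?_⟩
    by_contra hnA
    have := crossing x hxE r₀ n hxr₀ hn (Reachable.refl _) hnA
    exact hxr₁ this.2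
  have hpS : p ∉ S := by
    intro hmem
    exact hdisj (hmem.2 r₁ hpr₁).symm
  have hx'S : x' ∉ S := fun hmem => ht'nA (hmem.2 t' hx't')
  have hedge : ∀ (f' : Atom σ q.Var), f' ∈ q.atoms → ∀ a b, a ∈ Set.range f'.args →
      b ∈ Set.range f'.args → a ∈ S → b ∉ S → b = p := by
    intro f' hf' a b haf hbf haS hbS
    have hb : b ∈ adom q.atoms := mem_adom_iff.mpr ⟨f', hf', hbf⟩
    have hbE : b ∈ q.existVars := by rw [hE]; exact hb
    obtain ⟨r2, hr2⟩ := td.covers f' hf'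
    have haE : a ∈ q.existVars := by rw [hE]; exact haS.1
    have har2 : a ∈ td.bag r2 := hr2 ⟨haf, haE⟩
    have hbr2 : b ∈ td.bag r2 := hr2 ⟨hbf, hbE⟩
    have hAr2 : A r2 := haS.2 r2 har2
    have hbn : ∃ n, b ∈ td.bag n ∧ ¬ A n := by
      by_contra hno
      push_neg at hno
      exact hbS ⟨hb, hno⟩
    obtain ⟨n, hbn, hnA⟩ := hbn
    have hcr := crossing b hbE r2 n hbr2 hbn hAr2 hnA
    rcases bag_two harity td hw r₀ hpr₀ hxr₀ hcr.1 hpx with e | e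
    · exact e
    · exact absurd (by rw [e]; exact hxS) hbS
  set h : q.Var → q.Var := fun z => if z ∈ S then g z else z with hhdef
  have hhom : IsHom h q.atoms q.atoms := by
    intro f' hf'
    by_cases hex : ∃ i, f'.args i ∈ S
    · have heq : f'.map h = f'.map g := by
        obtain ⟨r, ar⟩ := f'
        simp only [Atom.map, Atom.mk.injEq, heq_eq_eq, true_and]
        funext i
        by_cases hi : ar i ∈ S
        · simp [hhdef, hi]
        · obtain ⟨j, hj⟩ := hex
          have hip := hedge ⟨r, ar⟩ hf' (ar j) (ar i) ⟨j, rfl⟩ ⟨i, rfl⟩ hj hi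
          simp only [hhdef, if_neg hi]
          rw [hip, hgp]
      rw [heq]
      exact hg f' hf'
    · have heq : f'.map h = f' := by
        obtain ⟨r, ar⟩ := f'
        simp only [Atom.map, Atom.mk.injEq, heq_eq_eq, true_and]
        funext i
        push_neg at hex
        simp [hhdef, hex i]
      rw [heq]
      exact hf'
  have hInj := injOn_adom hcore hhom
  have heq1 : h x = x' := by simp [hhdef, hxS, hx'def]
  have heq2 : h x' = x' := by simp [hhdef, hx'S]
  exact hxx' (hInj hx hx'0 (heq1.trans heq2.symm))

end AuxProof

/-- A connected Boolean core in `GHW(1)` over a binary schema has at most one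
endomorphism mapping `u` to `v`. -/
theorem statement12 (σ : Schema) (harity : ∀ R : σ.Rel, σ.arity R ≤ 2)
    (q : CQ σ 0) (hconn : q.IsConnected) (hghw : q.ghwLE 1) (hcore : IsCore q)
    (u v : q.Var) (hu : u ∈ adom q.atoms) (hv : v ∈ adom q.atoms)
    (h1 h2 : q.Var → q.Var)
    (hh1 : IsHom h1 q.atoms q.atoms) (hh2 : IsHom h2 q.atoms q.atoms)
    (h1uv : h1 u = v) (h2uv : h2 u = v) :
    ∀ x ∈ adom q.atoms, h1 x = h2 x := by
  classical
  obtain ⟨m, hm, hfix⟩ := exists_iter_fix hcore hh1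
  obtain ⟨m', rfl⟩ : ∃ m', m = m' + 1 := ⟨m - 1, by omega⟩
  set g : q.Var → q.Var := h1^[m'] ∘ h2 with hgdef
  have hgHom : IsHom g q.atoms q.atoms := ishom_comp (ishom_iter hh1 m') hh2
  have hgu : g u = u := by
    show h1^[m'] (h2 u) = u
    rw [h2uv, ← h1uv, ← Function.iterate_succ_apply]
    exact hfix u hu
  have hconn' : (SimpleGraph.induce (adom q.atoms) (gaifmanOf q.atoms)).Connected := hconn
  have key : ∀ (a b : ↥(adom q.atoms))
      (_ : (SimpleGraph.induce (adom q.atoms) (gaifmanOf q.atoms)).Walk a b),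
      g a.val = a.val → g b.val = b.val := by
    intro a b w
    induction w with
    | nil => exact id
    | @cons a c _ hadj w ih =>
      intro hga
      apply ih
      have hadj' : (gaifmanOf q.atoms).Adj a.val c.val := hadj
      obtain ⟨hne, f, hf, haf, hcf⟩ := hadj'
      exact fix_adj harity q hghw hcore hgHom hne f hf haf hcf hga
  have hfixg : ∀ z ∈ adom q.atoms, g z = z := by
    intro z hz
    obtain ⟨w0⟩ := hconn'.preconnected ⟨u, hu⟩ ⟨z, hz⟩
    exact key _ _ w0 hgu
  intro z hz
  have hz2 : h2 z ∈ adom q.atoms := mapsTo_adom hh2 hz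
  calc h1 z = h1 (g z) := by rw [hfixg z hz]
    _ = h1^[m' + 1] (h2 z) := by
        show h1 (h1^[m'] (h2 z)) = h1^[m' + 1] (h2 z)
        rw [Function.iterate_succ_apply']
    _ = h2 z := hfix _ hz2
end

section
/- Fix k ≥ 1. For every CQ q(x̄) and every set Σ of constraints consisting exclusively of equality-generating dependencies, or consisting exclusively of guarded tuple-generating dependencies, there exists a CQ q'(x̄') in GHW(k)^∞ that is a GHW(k)^∞-overapproximation of q under Σ. -/
/-- A constraint: a tuple-generating dependency (given by its body and head,
conjunctions of atoms over variables from `ℕ`), or an equality-generating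
dependency (given by its body and the two variables that are equated). -/
inductive Constraint (σ : Schema) where
  | tgd (body head : DB σ ℕ) : Constraint σ
  | egd (body : DB σ ℕ) (y z : ℕ) : Constraint σ

/-- Well-formedness: bodies and heads are finite, and the equated variables of
an egd occur in its body. -/
def Constraint.WF {σ : Schema} : Constraint σ → Prop
  | .tgd body head => body.Finite ∧ head.Finite
  | .egd body y z => body.Finite ∧ y ∈ adom body ∧ z ∈ adom body

/-- Whether a constraint is an egd. -/
def Constraint.IsEgd {σ : Schema} : Constraint σ → Prop
  | .tgd _ _ => False
  | .egd _ _ _ => True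

/-- Whether a constraint is a guarded tgd: a tgd some of whose body atoms
mentions all the variables of the body. -/
def Constraint.IsGuardedTgd {σ : Schema} : Constraint σ → Prop
  | .tgd body _ => ∃ f ∈ body, adom body ⊆ Set.range f.args
  | .egd _ _ _ => False

/-- Satisfaction of a constraint by a database: for a tgd, every homomorphic
image of the body extends (consistently on the shared variables) to a
homomorphic image of the head; for an egd, every homomorphism of the body
identifies the two equated variables. -/
def Satisfies {σ : Schema} (D : DB σ ℕ) : Constraint σ → Prop
  | .tgd body head => ∀ h : ℕ → ℕ, IsHom h body D →
      ∃ h' : ℕ → ℕ, IsHom h' head D ∧ ∀ x ∈ adom body ∩ adom head, h' x = h x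
  | .egd body y z => ∀ h : ℕ → ℕ, IsHom h body D → h y = h z

/-- Containment under a set of constraints `C`: containment of the results over
every finite database satisfying all constraints in `C`. -/
def leUnder {σ : Schema} {n : ℕ} (C : Set (Constraint σ))
    (q q' : CQI σ n) : Prop :=
  ∀ D : DB σ ℕ, D.Finite → (∀ c ∈ C, Satisfies D c) → q.eval D ⊆ q'.eval D


section TreeGlue

variable {I : Type} {N : I → Type} (T : ∀ i, SimpleGraph (N i)) (rt : ∀ i, N i)

def glueAdj : Option (Σ i, N i) → Option (Σ i, N i) → Prop := fun a b =>
  (∃ (i : I) (t s : N i), a = some ⟨i, t⟩ ∧ b = some ⟨i, s⟩ ∧ (T i).Adj t s) ∨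
  (a = none ∧ ∃ i, b = some ⟨i, rt i⟩) ∨
  (b = none ∧ ∃ i, a = some ⟨i, rt i⟩)

def glue : SimpleGraph (Option (Σ i, N i)) where
  Adj := glueAdj T rt
  symm := by
    constructor
    rintro a b (⟨i, t, s, rfl, rfl, h⟩ | ⟨rfl, i, rfl⟩ | ⟨rfl, i, rfl⟩)
    · exact Or.inl ⟨i, s, t, rfl, rfl, h.symm⟩
    · exact Or.inr (Or.inr ⟨rfl, i, rfl⟩)
    · exact Or.inr (Or.inl ⟨rfl, i, rfl⟩)
  loopless := by
    constructor
    rintro a (⟨i, t, s, rfl, h2, h⟩ | ⟨rfl, i, h⟩ | ⟨h2, i, rfl⟩)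
    · obtain ⟨-, ht⟩ := Sigma.mk.inj_iff.mp (Option.some.inj h2)
      rw [heq_eq_eq] at ht
      exact h.ne ht
    · simp at h
    · simp at h2

lemma glue_adj_some_some {i : I} {t : N i} {b} (h : (glue T rt).Adj (some ⟨i, t⟩) b)
    (hb : b ≠ none) : ∃ s : N i, b = some ⟨i, s⟩ ∧ (T i).Adj t s := by
  rcases h with ⟨j, t', s, ha, rfl, hadj⟩ | ⟨ha, -⟩ | ⟨rfl, -⟩
  · obtain ⟨hj, ht⟩ := Sigma.mk.inj_iff.mp (Option.some.inj ha)
    subst hj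
    rw [heq_eq_eq] at ht
    subst ht
    exact ⟨s, rfl, hadj⟩
  · exact absurd ha (by simp)
  · exact absurd rfl hb

lemma glue_adj_none {b} (h : (glue T rt).Adj none b) : ∃ i, b = some ⟨i, rt i⟩ := by
  rcases h with ⟨j, t', s, ha, rfl, hadj⟩ | ⟨-, i, rfl⟩ | ⟨rfl, i, ha⟩
  · exact absurd ha (by simp)
  · exact ⟨i, rfl⟩
  · exact absurd ha (by simp)

lemma glue_walk_piece {x y} (w : (glue T rt).Walk x y) :
    none ∉ w.support → ∀ (i : I) (t : N i), x = some ⟨i, t⟩ → ∃ s : N i, y = some ⟨i, s⟩ := by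
  induction w with
  | nil => exact fun _ i t hx => ⟨t, hx⟩
  | @cons u v y h w ih =>
    intro hn i t hx
    subst hx
    rw [SimpleGraph.Walk.support_cons] at hn
    have hn' : none ∉ w.support := fun hc => hn (List.mem_cons_of_mem _ hc)
    have hv : v ≠ none := fun hv => hn' (hv ▸ w.start_mem_support)
    obtain ⟨s, rfl, _⟩ := glue_adj_some_some T rt h hv
    exact ih hn' i s rfl

lemma glue_walk_proj {x y} (w : (glue T rt).Walk x y) :
    none ∉ w.support → ∀ (i : I) (t s : N i), x = some ⟨i, t⟩ → y = some ⟨i, s⟩ →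
    ∃ p : (T i).Walk t s,
      p.support.map (fun u => (some ⟨i, u⟩ : Option (Σ i, N i))) = w.support ∧
      p.edges.map (Sym2.map (fun u => (some ⟨i, u⟩ : Option (Σ i, N i)))) = w.edges := by
  induction w with
  | nil =>
    intro _ i t s hx hy
    rw [hx] at hy
    obtain ⟨-, ht⟩ := Sigma.mk.inj_iff.mp (Option.some.inj hy)
    rw [heq_eq_eq] at ht
    subst ht
    exact ⟨SimpleGraph.Walk.nil, by simp [hx], by simp⟩
  | @cons u v y h w ih =>
    intro hn i t s hx hy
    subst hx
    rw [SimpleGraph.Walk.support_cons] at hn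
    have hn' : none ∉ w.support := fun hc => hn (List.mem_cons_of_mem _ hc)
    have hv : v ≠ none := fun hv => hn' (hv ▸ w.start_mem_support)
    obtain ⟨u', rfl, hadj⟩ := glue_adj_some_some T rt h hv
    obtain ⟨p, hsup, hedg⟩ := ih hn' i u' s rfl hy
    exact ⟨SimpleGraph.Walk.cons hadj p,
      by simp [SimpleGraph.Walk.support_cons, hsup],
      by simp [SimpleGraph.Walk.edges_cons, hedg, Sym2.map_pair_eq]⟩

lemma glue_none_edge {x y} (w : (glue T rt).Walk x y) :
    y = none → ∀ (i : I) (t : N i), x = some ⟨i, t⟩ →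
    s(none, (some ⟨i, rt i⟩ : Option (Σ i, N i))) ∈ w.edges := by
  induction w with
  | nil => intro hy i t hx; rw [hy] at hx; exact absurd hx (by simp)
  | @cons u v y h w ih =>
    intro hy i t hx
    subst hx hy
    by_cases hv : v = none
    · subst hv
      rcases h with ⟨j, t', s, ha, hb, hadj⟩ | ⟨ha, -⟩ | ⟨-, j, ha⟩
      · exact absurd hb (by simp)
      · exact absurd ha (by simp)
      · obtain ⟨hj, ht⟩ := Sigma.mk.inj_iff.mp (Option.some.inj ha)
        subst hj
        rw [heq_eq_eq] at ht
        subst ht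
        exact List.mem_cons.mpr (Or.inl Sym2.eq_swap)
    · obtain ⟨u', rfl, hadj⟩ := glue_adj_some_some T rt h hv
      exact List.mem_cons_of_mem _ (ih rfl i u' rfl)

lemma glue_connected (hT : ∀ i, (T i).Connected) : (glue T rt).Connected := by
  rw [SimpleGraph.connected_iff_exists_forall_reachable]
  refine ⟨none, ?_⟩
  rintro (_ | ⟨i, t⟩)
  · exact SimpleGraph.Reachable.refl _
  · refine (SimpleGraph.Adj.reachable ?_).trans
      (((hT i).preconnected (rt i) t).map
        (⟨fun u => some ⟨i, u⟩, fun hadj => Or.inl ⟨i, _, _, rfl, rfl, hadj⟩⟩ : T i →g glue T rt))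
    exact Or.inr (Or.inl ⟨rfl, i, rfl⟩)

lemma glue_isTree (hT : ∀ i, (T i).IsTree) : (glue T rt).IsTree := by
  refine ⟨glue_connected T rt (fun i => (hT i).1), ?_⟩
  intro v c hc
  classical
  by_cases hnone : (none : Option (Σ i, N i)) ∈ c.support
  · have hc' := hc.rotate hnone
    revert hc'
    generalize c.rotate none hnone = w
    intro hc'
    cases w with
    | nil => exact hc'.ne_nil rfl
    | @cons _ z _ h p =>
      obtain ⟨i, rfl⟩ := glue_adj_none T rt h
      rw [SimpleGraph.Walk.cons_isCycle_iff] at hc'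
      obtain ⟨hp, hne⟩ := hc'
      exact hne (glue_none_edge T rt p rfl i (rt i) rfl)
  · have hv : v ≠ none := fun hv => hnone (hv ▸ c.start_mem_support)
    obtain ⟨s, rfl⟩ : ∃ s : Σ i, N i, v = some s := by
      cases v with
      | none => exact absurd rfl hv
      | some s => exact ⟨s, rfl⟩
    obtain ⟨i, t⟩ := s
    cases c with
    | nil => exact hc.ne_nil rfl
    | @cons _ z _ h p =>
      rw [SimpleGraph.Walk.cons_isCycle_iff] at hc
      obtain ⟨hp, hne⟩ := hc
      have hnone' : none ∉ (SimpleGraph.Walk.cons h p).support := hnone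
      rw [SimpleGraph.Walk.support_cons] at hnone'
      have hn' : none ∉ p.support := fun hmem => hnone' (List.mem_cons_of_mem _ hmem)
      have hz : z ≠ none := fun hzz => hn' (hzz ▸ p.start_mem_support)
      obtain ⟨u', rfl, hadj⟩ := glue_adj_some_some T rt h hz
      obtain ⟨q, hsup, hedg⟩ := glue_walk_proj T rt p hn' i u' t rfl rfl
      have hqsup : q.support.Nodup := by
        have := hp.support_nodup
        rw [← hsup] at this
        exact List.Nodup.of_map _ this
      have hqpath : q.IsPath := SimpleGraph.Walk.IsPath.mk' hqsup
      have huniq := (SimpleGraph.isAcyclic_iff_path_unique.mp (hT i).2)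
        ⟨q, hqpath⟩ (SimpleGraph.Path.singleton hadj.symm)
      have hq : q.edges = [s(u', t)] := by
        rw [show q = (SimpleGraph.Path.singleton hadj.symm).val from congrArg Subtype.val huniq]
        simp [SimpleGraph.Path.singleton]
      have hmem : s(u', t) ∈ q.edges := by rw [hq]; exact List.mem_cons_self
      have hmem2 : (Sym2.map (fun u => (some ⟨i, u⟩ : Option (Σ i, N i))) s(u', t)) ∈ p.edges :=
        hedg ▸ List.mem_map_of_mem hmem
      rw [Sym2.map_pair_eq, Sym2.eq_swap] at hmem2
      exact hne hmem2

end TreeGlue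

section Amalgam

variable {σ : Schema} {n : ℕ} {ι : Type} (Q : ι → CQI σ n)

/-- Composition of atom maps. -/
theorem Atom.map_map {α β γ : Type} (g : α → β) (h : β → γ) (f : Atom σ α) :
    (f.map g).map h = f.map (h ∘ g) := rfl

theorem Atom.map_congr {α β : Type} {g g' : α → β} {f : Atom σ α}
    (h : ∀ m, g (f.args m) = g' (f.args m)) : f.map g = f.map g' :=
  congrArg (fun fn => Atom.mk f.rel fn) (funext h)

/-- The relation on free-variable positions identified by some conjunct query. -/
def amalRel : Fin n → Fin n → Prop := fun j j' => ∃ i, (Q i).free j = (Q i).free j'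

def amalSetoid : Setoid (Fin n) := Relation.EqvGen.setoid (amalRel Q)

/-- Variables of the amalgam of the family `Q`. -/
def AVar : Type := Quotient (amalSetoid Q) ⊕ Σ i, (Q i).Var

/-- The renaming of the variables of `Q i` into the amalgam. -/
noncomputable def avr (i : ι) (v : (Q i).Var) : AVar Q :=
  letI := Classical.propDecidable (∃ j, (Q i).free j = v)
  if h : ∃ j, (Q i).free j = v then Sum.inl (Quotient.mk (amalSetoid Q) h.choose)
  else Sum.inr ⟨i, v⟩

/-- The amalgam of a countable family of possibly infinite CQs: the conjunction
of all of them, identifying their free variable tuples. -/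
noncomputable def amal [Countable ι] : CQI σ n where
  Var := AVar Q
  atoms := ⋃ i, Atom.map (avr Q i) '' (Q i).atoms
  free := fun j => Sum.inl (Quotient.mk (amalSetoid Q) j)
  ctblAtoms := Set.countable_iUnion fun i => ((Q i).ctblAtoms.image _)

lemma avr_free (i : ι) (j : Fin n) :
    avr Q i ((Q i).free j) = Sum.inl (Quotient.mk (amalSetoid Q) j) := by
  have hex : ∃ j', (Q i).free j' = (Q i).free j := ⟨j, rfl⟩
  unfold avr
  refine (dif_pos hex).trans ?_
  exact congrArg Sum.inl
    (Quotient.sound (Relation.EqvGen.rel _ _ ⟨i, hex.choose_spec⟩))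

lemma avr_not_free (i : ι) {v : (Q i).Var} (hv : v ∉ Set.range (Q i).free) :
    avr Q i v = Sum.inr ⟨i, v⟩ := by
  unfold avr
  refine (dif_neg ?_).trans rfl
  rintro ⟨j, hj⟩
  exact hv ⟨j, hj⟩

lemma amal_eval_le [Countable ι] {D : DB σ ℕ} {a : Fin n → ℕ}
    (ha : a ∈ (amal Q).eval D) (i : ι) : a ∈ (Q i).eval D := by
  obtain ⟨hadom, H, hH, hfree⟩ := ha
  refine ⟨hadom, H ∘ avr Q i, fun f hf => ?_, fun j => ?_⟩
  · change (f.map (avr Q i)).map H ∈ D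
    exact hH _ (Set.mem_iUnion.mpr ⟨i, Set.mem_image_of_mem _ hf⟩)
  · show H (avr Q i ((Q i).free j)) = a j
    rw [avr_free]
    exact hfree j

lemma amal_eval_ge [Countable ι] {D : DB σ ℕ} {a : Fin n → ℕ}
    (hadom : ∀ j, a j ∈ adom D) (ha : ∀ i, a ∈ (Q i).eval D) : a ∈ (amal Q).eval D := by
  choose h hhom hfree using fun i => (ha i).2
  have hconst : ∀ j j', Relation.EqvGen (amalRel Q) j j' → a j = a j' := by
    intro j j' hgen
    induction hgen with
    | rel j j' hr =>
      obtain ⟨i, hi⟩ := hr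
      rw [← hfree i j, ← hfree i j', hi]
    | refl => rfl
    | symm _ _ _ ih => exact ih.symm
    | trans _ _ _ _ _ ih1 ih2 => exact ih1.trans ih2
  refine ⟨hadom, Sum.elim (Quotient.lift a hconst) (fun s => h s.1 s.2), ?_, fun j => rfl⟩
  intro g hg
  obtain ⟨i, hg'⟩ := Set.mem_iUnion.mp hg
  obtain ⟨f, hf, rfl⟩ := hg'
  erw [Atom.map_map]
  erw [show f.map (Sum.elim (Quotient.lift a hconst) (fun s => h s.1 s.2) ∘ avr Q i)
      = f.map (h i) from Atom.map_congr fun m => ?_]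
  · exact hhom i f hf
  · show Sum.elim (Quotient.lift a hconst) (fun s => h s.1 s.2) (avr Q i (f.args m)) = h i (f.args m)
    by_cases hc : ∃ j, (Q i).free j = f.args m
    · unfold avr
      erw [dif_pos hc]
      show a hc.choose = h i (f.args m)
      calc a hc.choose = h i ((Q i).free hc.choose) := (hfree i hc.choose).symm
        _ = h i (f.args m) := congrArg (h i) hc.choose_spec
    · unfold avr
      erw [dif_neg hc]
      rfl

lemma amal_ghwLE [Countable ι] {k : ℕ} (hk : ∀ i, (Q i).ghwLE k) : (amal Q).ghwLE k := by
  classical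
  choose td htd using hk
  let rt : ∀ i, (td i).node := fun i => Classical.choice (td i).isTree.isConnected.nonempty
  -- every existential variable of the amalgam comes from a piece
  have hEx : ∀ y ∈ (amal Q).existVars, ∃ (i : ι) (w : (Q i).Var),
      y = Sum.inr ⟨i, w⟩ ∧ w ∈ (Q i).existVars := by
    rintro y ⟨hy1, hy2⟩
    obtain ⟨s, hs, hys⟩ := hy1
    simp only [Set.mem_range] at hs
    obtain ⟨g, rfl⟩ := hs
    simp only [Set.mem_iUnion] at hys
    obtain ⟨hgmem, m, hm⟩ := hys
    replace hgmem := Set.mem_iUnion.mp hgmem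
    obtain ⟨i, f, hf, rfl⟩ := hgmem
    have hnf : f.args m ∉ Set.range (Q i).free := by
      rintro ⟨j, hj⟩
      apply hy2
      rw [← hm]
      show (f.map (avr Q i)).args m ∈ Set.range (amal Q).free
      show avr Q i (f.args m) ∈ _
      rw [← hj, avr_free]
      exact ⟨j, rfl⟩
    refine ⟨i, f.args m, ?_, ⟨Set.mem_biUnion hf ⟨m, rfl⟩, hnf⟩⟩
    rw [← hm]
    show avr Q i (f.args m) = _
    exact avr_not_free Q i hnf
  refine ⟨⟨Option (Σ i, (td i).node), glue (fun i => (td i).T) rt,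
    glue_isTree _ _ (fun i => (td i).isTree),
    fun t => Option.rec ∅ (fun s => (fun v => (Sum.inr ⟨s.1, v⟩ : AVar Q)) '' (td s.1).bag s.2) t,
    ?_, ?_, ?_⟩, ?_⟩
  · -- bag_sub
    rintro (_ | ⟨i, t⟩) x hx
    · exact absurd hx (Set.notMem_empty x)
    · obtain ⟨v, hv, rfl⟩ := hx
      have hvE : v ∈ (Q i).existVars := (td i).bag_sub t hv
      obtain ⟨hva, hvf⟩ := hvE
      constructor
      · -- in adom of amalgam atoms
        obtain ⟨f, hf, m, hm⟩ : ∃ f ∈ (Q i).atoms, ∃ m, f.args m = v := by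
          obtain ⟨s, hs, hvs⟩ := hva
          simp only [Set.mem_range] at hs
          obtain ⟨f, rfl⟩ := hs
          simp only [Set.mem_iUnion] at hvs
          exact ⟨f, hvs.1, hvs.2⟩
        refine Set.mem_biUnion (Set.mem_iUnion.mpr ⟨i, Set.mem_image_of_mem _ hf⟩) ⟨m, ?_⟩
        show avr Q i (f.args m) = _
        rw [hm, avr_not_free Q i hvf]
      · rintro ⟨j, hj⟩
        exact absurd hj (by simp [amal])
  · -- covers
    intro g hg
    replace hg := Set.mem_iUnion.mp hg
    obtain ⟨i, f, hf, rfl⟩ := hg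
    obtain ⟨t, ht⟩ := (td i).covers f hf
    refine ⟨some ⟨i, t⟩, ?_⟩
    rintro x ⟨hx1, hx2⟩
    obtain ⟨m, hm⟩ := hx1
    by_cases hc : f.args m ∈ Set.range (Q i).free
    · exfalso
      obtain ⟨j, hj⟩ := hc
      refine hx2.2 ⟨j, ?_⟩
      show Sum.inl _ = x
      rw [← avr_free Q i j, hj]
      exact hm
    · have hx : x = Sum.inr ⟨i, f.args m⟩ := by
        rw [← hm]; exact (avr_not_free Q i hc).symm ▸ (avr_not_free Q i hc)
      have hmem : f.args m ∈ (td i).bag t :=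
        ht ⟨⟨m, rfl⟩, Set.mem_biUnion hf ⟨m, rfl⟩, hc⟩
      exact ⟨f.args m, hmem, hx.symm⟩
  · -- conn
    intro y hy
    obtain ⟨i, w, rfl, hw⟩ := hEx y hy
    have hconn := (td i).conn w hw
    refine hconn.map ⟨fun s => ⟨some ⟨i, s.1⟩, ⟨w, s.2, rfl⟩⟩, ?_⟩ ?_
    · exact fun hadj => Or.inl ⟨i, _, _, rfl, rfl, hadj⟩
    · rintro ⟨(_ | ⟨i', t⟩), hz⟩
      · exact hz.elim
      · obtain ⟨v, hv, hveq⟩ := hz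
        obtain ⟨hi, hveq'⟩ := Sigma.mk.inj_iff.mp (Sum.inr.inj hveq)
        subst hi
        rw [heq_eq_eq] at hveq'
        subst hveq'
        exact ⟨⟨t, hv⟩, rfl⟩
  · -- width
    rintro (_ | ⟨i, t⟩)
    · exact ⟨∅, by simp, by simp, by simp⟩
    · obtain ⟨S, hS1, hS2, hS3⟩ := htd i t
      refine ⟨S.image (Atom.map (avr Q i)), ?_, le_trans (Finset.card_image_le) hS2, ?_⟩
      · intro g hg
        simp only [Finset.coe_image, Set.mem_image, Finset.mem_coe] at hg
        obtain ⟨f, hf, rfl⟩ := hg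
        exact Set.mem_iUnion.mpr ⟨i, Set.mem_image_of_mem _ (hS1 hf)⟩
      · rintro x ⟨v, hv, rfl⟩
        have hvE := (td i).bag_sub t hv
        obtain ⟨f, hfS, m, hm⟩ : ∃ f ∈ S, ∃ m, f.args m = v := by
          have := hS3 hv
          simp only [Set.mem_iUnion] at this
          obtain ⟨f, hf, m, hm⟩ := this
          exact ⟨f, hf, m, hm⟩
        refine Set.mem_biUnion (s := (↑(S.image (Atom.map (avr Q i))) : Set (Atom σ (AVar Q))))
          (by simp only [Finset.coe_image, Set.mem_image, Finset.mem_coe]; exact ⟨f, hfS, rfl⟩)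
          ⟨m, ?_⟩
        show avr Q i (f.args m) = _
        rw [hm, avr_not_free Q i hvE.2]

end Amalgam

section Top

variable {σ : Schema} {n : ℕ}

/-- The trivial (always true, up to active-domain conditions) CQ: no atoms. -/
def topCQI (σ : Schema) (n : ℕ) : CQI σ n := ⟨Fin n, ∅, id, Set.countable_empty⟩

lemma topCQI_ghwLE (k : ℕ) : (topCQI σ n).ghwLE k := by
  refine ⟨⟨PUnit, ⊥, ⟨?_, ?_⟩, fun _ => ∅, fun t => Set.empty_subset _,
    fun f hf => absurd hf (Set.notMem_empty f), fun y hy => ?_⟩,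
    fun t => ⟨∅, by simp, by simp, by simp⟩⟩
  · rw [SimpleGraph.connected_iff_exists_forall_reachable]
    exact ⟨PUnit.unit, fun w => by
      rw [Subsingleton.elim w PUnit.unit]⟩
  · intro v c hc
    cases c with
    | nil => exact hc.ne_nil rfl
    | cons h p => simp at h
  · obtain ⟨hy1, -⟩ := hy
    simp [topCQI, adom] at hy1
    obtain ⟨f, hf, -⟩ := Set.mem_iUnion₂.mp hy1
    exact absurd hf (Set.notMem_empty f)

lemma topCQI_le (q : CQ σ n) (C : Set (Constraint σ)) : leUnder C q.toI (topCQI σ n) :=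
  fun _D _ _ a ha => ⟨ha.1, a, fun f hf => absurd hf (Set.notMem_empty f), fun _ => rfl⟩

lemma countable_atom (σ : Schema) : Countable (Atom σ ℕ) := by
  haveI := σ.rel_finite
  refine Function.Injective.countable
    (f := fun f : Atom σ ℕ => (⟨f.rel, f.args⟩ : Σ r : σ.Rel, (Fin (σ.arity r) → ℕ))) ?_
  rintro ⟨r, args⟩ ⟨r', args'⟩ h
  obtain ⟨hr, hargs⟩ := Sigma.mk.inj_iff.mp h
  subst hr
  rw [heq_eq_eq] at hargs
  subst hargs
  rfl

end Top

/-- Under a set of egds, or a set of guarded tgds, every CQ has a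
`GHW(k)^∞`-overapproximation under the constraints. -/

theorem statement15 (σ : Schema) (k : ℕ) (hk : 1 ≤ k) (n : ℕ) (q : CQ σ n)
    (C : Set (Constraint σ)) (hwf : ∀ c ∈ C, c.WF)
    (hkind : (∀ c ∈ C, c.IsEgd) ∨ (∀ c ∈ C, c.IsGuardedTgd)) :
    ∃ q' : CQI σ n, q'.ghwLE k ∧ leUnder C q.toI q' ∧
      ¬ ∃ q'' : CQI σ n, q''.ghwLE k ∧ leUnder C q.toI q'' ∧
        leUnder C q'' q' ∧ ¬ leUnder C q' q'' := by
  classical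
  haveI : Countable (Atom σ ℕ) := countable_atom σ
  haveI hModC : Countable {D : DB σ ℕ // D.Finite ∧ ∀ c ∈ C, Satisfies D c} := by
    have h0 : {t : Set (Atom σ ℕ) | t.Finite ∧ t ⊆ Set.univ}.Countable :=
      Set.countable_setOf_finite_subset Set.countable_univ
    have h1 : {D : DB σ ℕ | D.Finite ∧ ∀ c ∈ C, Satisfies D c}.Countable :=
      Set.Countable.mono (by intro D hD; exact ⟨hD.1, Set.subset_univ _⟩) h0
    exact h1.to_subtype
  set Mod := {D : DB σ ℕ // D.Finite ∧ ∀ c ∈ C, Satisfies D c} with hMod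
  set S : Set ((Mod → Set (Fin n → ℕ))ᵒᵈ) :=
    {p | ∃ q'' : CQI σ n, q''.ghwLE k ∧ leUnder C q.toI q'' ∧
      p = fun D => q''.eval D.1} with hS
  have key := zorn_le₀ S ?_
  · obtain ⟨m, hm⟩ := key
    obtain ⟨⟨q', hg, hle, hmeq⟩, hmax⟩ := hm
    refine ⟨q', hg, hle, ?_⟩
    rintro ⟨q'', h1, h2, h3, h4⟩
    apply h4
    have hzS : (fun D : Mod => q''.eval D.1) ∈ S := ⟨q'', h1, h2, rfl⟩
    have hle2 : m ≤ (fun D : Mod => q''.eval D.1) := by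
      show (fun D : Mod => q''.eval D.1) ≤ (id m : Mod → Set (Fin n → ℕ))
      rw [hmeq]
      exact fun D => h3 D.1 D.2.1 D.2.2
    have hfin := hmax hzS hle2
    have hfin' : (id m : Mod → Set (Fin n → ℕ)) ≤ fun D : Mod => q''.eval D.1 := hfin
    intro D hfinD hsat
    have := hfin' ⟨D, hfinD, hsat⟩
    rw [hmeq] at this
    exact this
  · intro c hcsub hchain
    by_cases hne : c.Nonempty
    · obtain ⟨p₀, hp₀⟩ := hne
      have hw : ∀ p ∈ c, ∃ q'' : CQI σ n, q''.ghwLE k ∧ leUnder C q.toI q'' ∧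
          p = fun D => q''.eval D.1 := fun p hp => hcsub hp
      let pickp : Mod × (Fin n → ℕ) → {p // p ∈ c} := fun x =>
        if h : ∃ p ∈ c, x.2 ∉ (id p : Mod → Set (Fin n → ℕ)) x.1 then
          ⟨h.choose, h.choose_spec.1⟩ else ⟨p₀, hp₀⟩
      have hw' : ∀ x : Mod × (Fin n → ℕ), ∃ q'' : CQI σ n, q''.ghwLE k ∧
          leUnder C q.toI q'' ∧ (pickp x).1 = fun D => q''.eval D.1 :=
        fun x => hw _ (pickp x).2
      choose W hW1 hW2 hW3 using hw'
      refine ⟨fun D => (amal W).eval D.1, ⟨amal W, amal_ghwLE W hW1, ?_, rfl⟩, ?_⟩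
      · intro D hfin hsat a ha
        exact amal_eval_ge W (fun j => ha.1 j) (fun x => hW2 x D hfin hsat ha)
      · intro z hz
        show (fun D : Mod => (amal W).eval D.1) ≤ (id z : Mod → Set (Fin n → ℕ))
        intro D a ha
        by_contra hna
        have hex : ∃ p ∈ c, a ∉ (id p : Mod → Set (Fin n → ℕ)) D := ⟨z, hz, hna⟩
        have hmem := amal_eval_le W ha (D, a)
        have hmem2 : a ∈ ((pickp (D, a)).1 : (Mod → Set (Fin n → ℕ))ᵒᵈ) D := by
          rw [hW3 (D, a)]
          exact hmem
        have hpick : pickp (D, a) = ⟨hex.choose, hex.choose_spec.1⟩ := dif_pos hex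
        rw [hpick] at hmem2
        exact hex.choose_spec.2 hmem2
    · exact ⟨fun D => (topCQI σ n).eval D.1,
        ⟨topCQI σ n, topCQI_ghwLE k, topCQI_le q C, rfl⟩,
        fun z hz => (hne ⟨z, hz⟩).elim⟩
end

section
/- Fix k ≥ 1 and let q, q' be CQs with q' ∈ GHW(k). If q ⊆ q' (respectively, q' ⊆ q), then q' is a GHW(k)-Δ-approximation of q if and only if q' is a GHW(k)-overapproximation (respectively, GHW(k)-underapproximation) of q. -/
/-- If `q ⊆ q'` (resp. `q' ⊆ q`), then `q'` is a `GHW(k)`-Δ-approximation of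
`q` iff it is a `GHW(k)`-overapproximation (resp. underapproximation) of `q`. -/
theorem statement16 (σ : Schema) (k n : ℕ) (hk : 1 ≤ k)
    (q q' : CQ σ n) (hq' : q'.ghwLE k) :
    (q.le q' → (IsDeltaApprox k q q' ↔ IsOverapprox k q q')) ∧
    (q'.le q → (IsDeltaApprox k q q' ↔ IsUnderapprox k q q')) := by
  constructor
  · -- Overapproximation case: q ⊆ q'
    intro hle
    constructor
    · rintro ⟨hg, hmax⟩
      refine ⟨hq', hle, ?_⟩
      rintro ⟨q'', hg'', hle1, hle2, hne⟩
      apply hmax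
      refine ⟨q'', hg'', ?_, ?_⟩
      · intro D hD x hx
        rcases Set.mem_symmDiff.1 hx with ⟨h1, h2⟩ | ⟨h1, h2⟩
        · exact absurd (hle1 D hD h1) h2
        · exact Set.mem_symmDiff.2 (Or.inr ⟨hle2 D hD h1, h2⟩)
      · intro hd
        apply hne
        refine ⟨hle2, ?_⟩
        intro D hD x hx
        by_cases hq : x ∈ q.eval D
        · exact hle1 D hD hq
        · have := hd D hD (Set.mem_symmDiff.2 (Or.inr ⟨hx, hq⟩))
          rcases Set.mem_symmDiff.1 this with ⟨h1, h2⟩ | ⟨h1, h2⟩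
          · exact absurd h1 hq
          · exact h1
    · rintro ⟨hg, hle', hmax⟩
      refine ⟨hq', ?_⟩
      rintro ⟨q'', hg'', hd1, hd2⟩
      have hle1 : q.le q'' := by
        intro D hD x hx
        by_contra hxn
        have := hd1 D hD (Set.mem_symmDiff.2 (Or.inl ⟨hx, hxn⟩))
        rcases Set.mem_symmDiff.1 this with ⟨h1, h2⟩ | ⟨h1, h2⟩
        · exact h2 (hle D hD hx)
        · exact h2 hx
      have hle2 : q''.le q' := by
        intro D hD x hx
        by_contra hxn
        have hxq : x ∉ q.eval D := fun h => hxn (hle D hD h)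
        have := hd1 D hD (Set.mem_symmDiff.2 (Or.inr ⟨hx, hxq⟩))
        rcases Set.mem_symmDiff.1 this with ⟨h1, h2⟩ | ⟨h1, h2⟩
        · exact hxq h1
        · exact hxn h1
      have heq : q''.equiv q' := by
        by_contra hne
        exact hmax ⟨q'', hg'', hle1, hle2, hne⟩
      apply hd2
      intro D hD x hx
      rcases Set.mem_symmDiff.1 hx with ⟨h1, h2⟩ | ⟨h1, h2⟩
      · exact Set.mem_symmDiff.2 (Or.inl ⟨h1, fun h => h2 (heq.1 D hD h)⟩)
      · exact Set.mem_symmDiff.2 (Or.inr ⟨heq.2 D hD h1, h2⟩)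
  · -- Underapproximation case: q' ⊆ q
    intro hle
    constructor
    · rintro ⟨hg, hmax⟩
      refine ⟨hq', hle, ?_⟩
      rintro ⟨q'', hg'', hle1, hle2, hne⟩
      apply hmax
      refine ⟨q'', hg'', ?_, ?_⟩
      · intro D hD x hx
        rcases Set.mem_symmDiff.1 hx with ⟨h1, h2⟩ | ⟨h1, h2⟩
        · refine Set.mem_symmDiff.2 (Or.inl ⟨h1, fun h => h2 (hle1 D hD h)⟩)
        · exact absurd (hle2 D hD h1) h2
      · intro hd
        apply hne
        refine ⟨?_, hle1⟩
        intro D hD x hx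
        by_contra hxn
        have hxq : x ∈ q.eval D := hle2 D hD hx
        have := hd D hD (Set.mem_symmDiff.2 (Or.inl ⟨hxq, hxn⟩))
        rcases Set.mem_symmDiff.1 this with ⟨h1, h2⟩ | ⟨h1, h2⟩
        · exact h2 hx
        · exact h2 hxq
    · rintro ⟨hg, hle', hmax⟩
      refine ⟨hq', ?_⟩
      rintro ⟨q'', hg'', hd1, hd2⟩
      have hle2 : q''.le q := by
        intro D hD x hx
        by_contra hxn
        have := hd1 D hD (Set.mem_symmDiff.2 (Or.inr ⟨hx, hxn⟩))
        rcases Set.mem_symmDiff.1 this with ⟨h1, h2⟩ | ⟨h1, h2⟩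
        · exact hxn h1
        · exact hxn (hle D hD h1)
      have hle1 : q'.le q'' := by
        intro D hD x hx
        by_contra hxn
        have hxq : x ∈ q.eval D := hle D hD hx
        have := hd1 D hD (Set.mem_symmDiff.2 (Or.inl ⟨hxq, hxn⟩))
        rcases Set.mem_symmDiff.1 this with ⟨h1, h2⟩ | ⟨h1, h2⟩
        · exact h2 hx
        · exact h2 hxq
      have heq : q''.equiv q' := by
        by_contra hne
        exact hmax ⟨q'', hg'', hle1, hle2, hne⟩
      apply hd2
      intro D hD x hx
      rcases Set.mem_symmDiff.1 hx with ⟨h1, h2⟩ | ⟨h1, h2⟩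
      · exact Set.mem_symmDiff.2 (Or.inl ⟨h1, fun h => h2 (heq.1 D hD h)⟩)
      · exact Set.mem_symmDiff.2 (Or.inr ⟨heq.2 D hD h1, h2⟩)
end
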